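/- arXiv:2510.05383 — 7 statements merged into one kernel-verified Lean document; each statement's English description precedes it below -/
import Mathlib

section
/- The measure μ(x) = ∏ᵢ (k⁺(i)/k⁻(i))^{cᵢ(x)} on the polymer state space satisfies the global balance equations of the copolymerization CTMC: for every x ∈ 𝒯, q(x)·μ(x) = Σ_{y ≠ x} μ(y)·q(y,x), where q(x) = Σ_{y ≠ x} q(x,y) is the total exit rate (the sums are finite since each state has at most d+1 neighbors with positive rate). -/
/-!
The measure is reversible: since `μ (x ++ [i]) = μ x * (k⁺ i / k⁻ i)`, the flux
`μ x * q x (x ++ [i]) = μ x * k⁺ i` along each edge of the tree of words equals the flux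
`μ (x ++ [i]) * k⁻ i` back, and all other off-diagonal rates vanish. Detailed balance gives
global balance term by term, so no summability of the rates is needed.
-/

open Finset

def DetailedBalance {α R : Type*} [Mul R] (μ : α → R) (q : α → α → R) : Prop :=
  ∀ x y, μ x * q x y = μ y * q y x

theorem DetailedBalance.globalBalance {α R : Type*} [DecidableEq α] [Semifield R]
    [TopologicalSpace R] [IsTopologicalSemiring R] [T2Space R] {μ : α → R} {q : α → α → R}
    (h : DetailedBalance μ q) (x : α) :
    (∑' y, if y = x then 0 else q x y) * μ x = ∑' y, if y = x then 0 else μ y * q y x := by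
  rw [← tsum_mul_right]
  congr 1 with y
  split_ifs
  · exact zero_mul _
  · rw [← h, mul_comm]

theorem List.count_append_singleton {α : Type*} [DecidableEq α] (x : List α) (i j : α) :
    (x ++ [j]).count i = x.count i + if i = j then 1 else 0 := by
  simp [List.count_append, List.count_singleton', eq_comm]

theorem prod_pow_count_append_singleton {α M : Type*} [Fintype α] [DecidableEq α]
    [CommMonoid M] (r : α → M) (x : List α) (j : α) :
    ∏ i, r i ^ (x ++ [j]).count i = (∏ i, r i ^ x.count i) * r j := by
  simp_rw [List.count_append_singleton, pow_add, prod_mul_distrib, pow_ite, pow_one, pow_zero,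
    prod_ite_eq', mem_univ, if_true]

theorem detailedBalance_copolymer {d : ℕ} (kp km : Fin d → ℝ) (hkm : ∀ i, km i ≠ 0)
    (q : List (Fin d) → List (Fin d) → ℝ)
    (hq_attach : ∀ (x : List (Fin d)) (i : Fin d), q x (x ++ [i]) = kp i)
    (hq_detach : ∀ (x : List (Fin d)) (i : Fin d), q (x ++ [i]) x = km i)
    (hq_zero : ∀ x y : List (Fin d),
      (¬ ∃ i : Fin d, y = x ++ [i]) → (¬ ∃ i : Fin d, x = y ++ [i]) → q x y = 0)
    (μ : List (Fin d) → ℝ)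
    (hμ : ∀ x : List (Fin d), μ x = ∏ i : Fin d, (kp i / km i) ^ (x.count i)) :
    DetailedBalance μ q := by
  have hedge (x : List (Fin d)) (i : Fin d) :
      μ x * q x (x ++ [i]) = μ (x ++ [i]) * q (x ++ [i]) x := by
    rw [hq_attach, hq_detach, hμ, hμ, prod_pow_count_append_singleton, mul_assoc,
      div_mul_cancel₀ _ (hkm i)]
  intro x y
  by_cases hchild : ∃ i, y = x ++ [i]
  · obtain ⟨i, rfl⟩ := hchild
    exact hedge x i
  by_cases hparent : ∃ i, x = y ++ [i]
  · obtain ⟨i, rfl⟩ := hparent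
    exact (hedge y i).symm
  rw [hq_zero x y hchild hparent, hq_zero y x hparent hchild, mul_zero, mul_zero]

theorem stmt0_general (d : ℕ) (kp km : Fin d → ℝ)
    (hkm : ∀ i, 0 < km i)
    (q : List (Fin d) → List (Fin d) → ℝ)
    (hq_attach : ∀ (x : List (Fin d)) (i : Fin d), q x (x ++ [i]) = kp i)
    (hq_detach : ∀ (x : List (Fin d)) (i : Fin d), q (x ++ [i]) x = km i)
    (hq_zero : ∀ x y : List (Fin d),
      (¬ ∃ i : Fin d, y = x ++ [i]) → (¬ ∃ i : Fin d, x = y ++ [i]) → q x y = 0)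
    (μ : List (Fin d) → ℝ)
    (hμ : ∀ x : List (Fin d), μ x = ∏ i : Fin d, (kp i / km i) ^ (x.count i)) :
    ∀ x : List (Fin d),
      (∑' y : List (Fin d), if y = x then 0 else q x y) * μ x
        = ∑' y : List (Fin d), if y = x then 0 else μ y * q y x :=
  (detailedBalance_copolymer kp km (fun i => (hkm i).ne') q hq_attach hq_detach hq_zero μ
    hμ).globalBalance

/-- The measure `μ(x) = ∏ i, (k⁺ i / k⁻ i) ^ (count of i in x)` on the
polymer state space `List (Fin d)` satisfies the global balance equations of the
copolymerization CTMC: for every state `x`,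
`q(x) · μ(x) = Σ_{y ≠ x} μ(y) · q(y,x)`, where `q(x) = Σ_{y ≠ x} q(x,y)` is the total
exit rate.  The transition rates are `q(x, x·i) = k⁺ i`, `q(x·i, x) = k⁻ i`, and `0`
for every other pair. -/
theorem stmt0 (d : ℕ) (hd : 1 ≤ d) (kp km : Fin d → ℝ)
    (hkp : ∀ i, 0 < kp i) (hkm : ∀ i, 0 < km i)
    (q : List (Fin d) → List (Fin d) → ℝ)
    (hq_attach : ∀ (x : List (Fin d)) (i : Fin d), q x (x ++ [i]) = kp i)
    (hq_detach : ∀ (x : List (Fin d)) (i : Fin d), q (x ++ [i]) x = km i)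
    (hq_zero : ∀ x y : List (Fin d),
      (¬ ∃ i : Fin d, y = x ++ [i]) → (¬ ∃ i : Fin d, x = y ++ [i]) → q x y = 0)
    (μ : List (Fin d) → ℝ)
    (hμ : ∀ x : List (Fin d), μ x = ∏ i : Fin d, (kp i / km i) ^ (x.count i)) :
    ∀ x : List (Fin d),
      (∑' y : List (Fin d), if y = x then 0 else q x y) * μ x
        = ∑' y : List (Fin d), if y = x then 0 else μ y * q y x :=
  stmt0_general d kp km hkm q hq_attach hq_detach hq_zero μ hμ
end

section
/- Assume α > 1 and let m be the unique positive real with Σᵣ k⁺(r)/(m + k⁻(r)) = 1. Define Fᵢ = k⁻(i)/(m + k⁻(i)) for i ∈ Fin d. Then each Fᵢ ∈ (0,1) and Fᵢ·((k⁻(i) + K) − Σᵣ k⁺(r)·Fᵣ) = k⁻(i) for every i; moreover, F is the unique vector in (0,1)^d satisfying this system, i.e., any G with Gᵢ ∈ (0,1) and Gᵢ·((k⁻(i) + K) − Σᵣ k⁺(r)·Gᵣ) = k⁻(i) for all i equals F. -/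
/-!
Put `φ(x) = ∑ r, k⁺ r / (x + k⁻ r)`. For any `G` with `Gᵢ ∈ (0,1)`, the number
`μ = K - ∑ r, k⁺ r · G r` turns the system into `Gᵢ (k⁻ i + μ) = k⁻ i`, which forces `μ > 0`
and `Gᵢ = k⁻ i / (μ + k⁻ i)`. Summing back gives `∑ r, k⁺ r · G r = K - μ φ(μ)`, i.e. `φ(μ) = 1`.
Since `φ` is strictly decreasing on `(0, ∞)`, `μ = m`, so `G = F`; conversely the same
computation with `μ = m` shows that `F` solves the system.
-/

open Finset

namespace SelfConsistent

variable {ι : Type*} [Fintype ι] (kp km : ι → ℝ)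

lemma div_add_mem_Ioo {a x : ℝ} (ha : 0 < a) (hx : 0 < x) : a / (x + a) ∈ Set.Ioo 0 1 :=
  ⟨by positivity, (div_lt_one (by positivity)).2 (by linarith)⟩

lemma sum_mul_div_add {x : ℝ} (hx : ∀ r, x + km r ≠ 0) :
    ∑ r, kp r * (km r / (x + km r)) = ∑ r, kp r - x * ∑ r, kp r / (x + km r) := by
  rw [mul_sum, ← sum_sub_distrib]
  refine sum_congr rfl fun r _ => ?_
  field_simp [hx r]
  ring

lemma strictAntiOn_sum_div_add [Nonempty ι] (hkp : ∀ r, 0 < kp r) (hkm : ∀ r, 0 ≤ km r) :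
    StrictAntiOn (fun x => ∑ r, kp r / (x + km r)) (Set.Ioi 0) := by
  intro x hx y hy hxy
  have hx : (0 : ℝ) < x := hx
  exact sum_lt_sum_of_nonempty univ_nonempty fun r _ =>
    div_lt_div_of_pos_left (hkp r) (by linarith [hkm r]) (by linarith)

lemma pos_of_mul_add_eq {g a μ : ℝ} (hg : g ∈ Set.Ioo 0 1) (ha : 0 < a) (h : g * (a + μ) = a) :
    0 < μ := by
  obtain ⟨hg0, hg1⟩ := hg
  nlinarith

lemma eq_div_add_of_mul_add_eq {g a μ : ℝ} (hμ : μ + a ≠ 0) (h : g * (a + μ) = a) :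
    g = a / (μ + a) := by
  rw [eq_div_iff hμ]
  linarith

lemma eq_div_add_of_selfConsistent (hkp : ∀ r, 0 < kp r) (hkm : ∀ r, 0 < km r)
    {m : ℝ} (hm : 0 < m) (hmeq : ∑ r, kp r / (m + km r) = 1) (G : ι → ℝ)
    (hG : ∀ i, G i ∈ Set.Ioo 0 1)
    (hGeq : ∀ i, G i * (km i + (∑ r, kp r - ∑ r, kp r * G r)) = km i) (i : ι) :
    G i = km i / (m + km i) := by
  set μ := ∑ r, kp r - ∑ r, kp r * G r with hμ
  have : Nonempty ι := ⟨i⟩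
  have hμpos : 0 < μ := pos_of_mul_add_eq (hG i) (hkm i) (hGeq i)
  have hden : ∀ r, μ + km r ≠ 0 := fun r => by linarith [hkm r]
  have hGval : G = fun r => km r / (μ + km r) :=
    funext fun r => eq_div_add_of_mul_add_eq (hden r) (hGeq r)
  have hφμ : ∑ r, kp r / (μ + km r) = 1 := by
    have hsum : ∑ r, kp r * G r = ∑ r, kp r - μ * ∑ r, kp r / (μ + km r) := by
      rw [hGval]
      exact sum_mul_div_add kp km hden
    have : μ * ∑ r, kp r / (μ + km r) = μ * 1 := by linarith
    exact mul_left_cancel₀ hμpos.ne' this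
  have hμm : μ = m :=
    (strictAntiOn_sum_div_add kp km hkp fun r => (hkm r).le).injOn hμpos hm (hφμ.trans hmeq.symm)
  rw [hGval, hμm]

end SelfConsistent

open SelfConsistent in
theorem stmt4_general (d : ℕ) (kp km : Fin d → ℝ)
    (hkp : ∀ i, 0 < kp i) (hkm : ∀ i, 0 < km i)
    (K : ℝ) (hK : K = ∑ i : Fin d, kp i)
    (m : ℝ) (hm : 0 < m) (hmeq : ∑ r : Fin d, kp r / (m + km r) = 1)
    (F : Fin d → ℝ) (hF : ∀ i, F i = km i / (m + km i)) :
    (∀ i, 0 < F i ∧ F i < 1) ∧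
    (∀ i, F i * ((km i + K) - ∑ r : Fin d, kp r * F r) = km i) ∧
    (∀ G : Fin d → ℝ, (∀ i, 0 < G i ∧ G i < 1) →
      (∀ i, G i * ((km i + K) - ∑ r : Fin d, kp r * G r) = km i) → G = F) := by
  have hF' : F = fun i => km i / (m + km i) := funext hF
  subst hK hF'
  have hsumF : ∑ r, kp r * (km r / (m + km r)) = ∑ r, kp r - m := by
    rw [sum_mul_div_add kp km fun r => by linarith [hkm r], hmeq, mul_one]
  refine ⟨fun i => div_add_mem_Ioo (hkm i) hm, fun i => ?_, fun G hG hGeq => ?_⟩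
  · rw [hsumF, show km i + ∑ r, kp r - (∑ r, kp r - m) = m + km i by ring]
    exact div_mul_cancel₀ _ (by linarith [hkm i])
  · funext i
    refine eq_div_add_of_selfConsistent kp km hkp hkm hm hmeq G hG (fun j => ?_) i
    convert hGeq j using 2
    ring

/-- Assume `α = Σ i, k⁺ i / k⁻ i > 1` and let `m` be the unique positive
real with `Σ r, k⁺ r / (m + k⁻ r) = 1`.  Define `F i = k⁻ i / (m + k⁻ i)`.  Then each
`F i ∈ (0,1)` and `F i · ((k⁻ i + K) − Σ r, k⁺ r · F r) = k⁻ i` for every `i`, where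
`K = Σ i, k⁺ i`; moreover `F` is the unique vector in `(0,1)^d` satisfying this system. -/
theorem stmt4 (d : ℕ) (hd : 1 ≤ d) (kp km : Fin d → ℝ)
    (hkp : ∀ i, 0 < kp i) (hkm : ∀ i, 0 < km i)
    (K : ℝ) (hK : K = ∑ i : Fin d, kp i)
    (hα : 1 < ∑ i : Fin d, kp i / km i)
    (m : ℝ) (hm : 0 < m) (hmeq : ∑ r : Fin d, kp r / (m + km r) = 1)
    (F : Fin d → ℝ) (hF : ∀ i, F i = km i / (m + km i)) :
    (∀ i, 0 < F i ∧ F i < 1) ∧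
    (∀ i, F i * ((km i + K) - ∑ r : Fin d, kp r * F r) = km i) ∧
    (∀ G : Fin d → ℝ, (∀ i, 0 < G i ∧ G i < 1) →
      (∀ i, G i * ((km i + K) - ∑ r : Fin d, kp r * G r) = km i) → G = F) :=
  stmt4_general d kp km hkp hkm K hK m hm hmeq F hF
end

section
/- Green function ratio formula: assume α > 1, let m be the unique positive real with Σᵣ k⁺(r)/(m + k⁻(r)) = 1, and set σ̄ᵢ = k⁺(i)/(m + k⁻(i)). Then G(x,y) < ∞ for all x, y ∈ 𝒯, and for every x ∈ 𝒯 and all i, j ∈ Fin d, G(o, x·j)·σ̄ᵢ·(k⁻(i) + K) = G(o, x·i)·σ̄ⱼ·(k⁻(j) + K); equivalently, G(o, x·j)/G(o, x·i) = σ̄ⱼ·(k⁻(j) + K)/(σ̄ᵢ·(k⁻(i) + K)). -/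
/-!
The jump chain is a nearest-neighbour walk on the tree of words. With `q` the total jump rate
(`K` at the root, `k⁻ i + K` at `x·i`), the function `g x = σ̄^x q x / m` solves the Poisson
equation `g = g P + δ_o`: the identity `Σ σ̄ = 1` is exactly what balances the flow into each
word. For `0 < t < m` the product weight `W x = ∏ k⁻ xₖ / (t + k⁻ xₖ)` satisfies `P W ≤ λ W` with
`λ < 1`; this bounds `Pⁿ(x, y) ≤ λⁿ W x / W y`, so every Green function is finite, and since
`Σ g W < ∞` the remainder `g Pᴺ` of the iterated Poisson equation tends to `0`. Hence
`G(o, ·) = g`, and the ratio formula is read off from `g`.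
-/

open scoped ENNReal
open Filter Topology Finset

theorem ENNReal.tsum_list_prod {ι : Type*} [Fintype ι] (c : ι → ℝ≥0∞) :
    ∑' l : List ι, (l.map c).prod = (1 - ∑ i, c i)⁻¹ := by
  rw [← ENNReal.tsum_geometric, ← (Equiv.sigmaFiberEquiv List.length).tsum_eq,
    ENNReal.tsum_sigma']
  refine tsum_congr fun n => ?_
  change ∑' v : List.Vector ι n, (v.toList.map c).prod = _
  rw [← (Equiv.vectorEquivFin ι n).symm.tsum_eq, tsum_fintype, Fintype.sum_pow]
  simp [Equiv.vectorEquivFin, List.map_ofFn, List.prod_ofFn]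

theorem ENNReal.ofReal_list_prod_map {ι : Type*} {f : ι → ℝ} (hf : ∀ i, 0 ≤ f i) (l : List ι) :
    ENNReal.ofReal (l.map f).prod = (l.map fun i => ENNReal.ofReal (f i)).prod := by
  induction l with
  | nil => simp
  | cons a l ih => simp [ENNReal.ofReal_mul (hf a), ih]

theorem ENNReal.sum_ofReal_mul_ofReal {ι : Type*} {s : Finset ι} {a b : ι → ℝ}
    (ha : ∀ i, 0 ≤ a i) (hb : ∀ i, 0 ≤ b i) :
    ∑ i ∈ s, ENNReal.ofReal (a i) * ENNReal.ofReal (b i) = ENNReal.ofReal (∑ i ∈ s, a i * b i) := by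
  rw [ENNReal.ofReal_sum_of_nonneg fun i _ => mul_nonneg (ha i) (hb i)]
  simp_rw [ENNReal.ofReal_mul (ha _)]

theorem List.append_singleton_injective {ι : Type*} (x : List ι) :
    Function.Injective fun j : ι => x ++ [j] :=
  fun a b h => by simpa using h

section ListTree

variable {ι : Type*} [Fintype ι]

theorem tsum_eq_sum_append_singleton {f : List ι → ℝ≥0∞} (x : List ι)
    (hf : ∀ y, (¬∃ j, y = x ++ [j]) → f y = 0) : ∑' y, f y = ∑ j, f (x ++ [j]) := by
  rw [← (List.append_singleton_injective x).tsum_eq, tsum_fintype]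
  intro y hy
  by_contra h
  exact hy (hf y fun ⟨j, hj⟩ => h ⟨j, hj.symm⟩)

theorem tsum_eq_sum_append_singleton_add {f : List ι → ℝ≥0∞} (x v : List ι)
    (hv : ∀ j, v ≠ x ++ [j]) (hf : ∀ y, (¬∃ j, y = x ++ [j]) → y ≠ v → f y = 0) :
    ∑' y, f y = ∑ j, f (x ++ [j]) + f v := by
  have hinj : Function.Injective fun o : Option ι => o.elim v (x ++ [·]) := by
    rintro (_ | a) (_ | b) h
    · rfl
    · exact absurd h (hv b)
    · exact absurd h.symm (hv a)
    · exact congrArg some (List.append_singleton_injective x h)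
  rw [← hinj.tsum_eq, tsum_fintype, Fintype.sum_option, add_comm]
  · rfl
  intro y hy
  by_contra h
  refine hy (hf y (fun ⟨j, hj⟩ => h ⟨some j, hj.symm⟩) fun hv => h ⟨none, hv.symm⟩)

end ListTree

section KernelPow

variable {α : Type*} [DecidableEq α]

noncomputable def kernelPow (P : α → α → ℝ≥0∞) : ℕ → α → α → ℝ≥0∞
  | 0, x, y => if x = y then 1 else 0
  | n + 1, x, y => ∑' z, kernelPow P n x z * P z y

variable (P : α → α → ℝ≥0∞)

theorem kernelPow_zero (x y : α) : kernelPow P 0 x y = if x = y then 1 else 0 := rfl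

theorem kernelPow_succ (n : ℕ) (x y : α) :
    kernelPow P (n + 1) x y = ∑' z, kernelPow P n x z * P z y := rfl

theorem tsum_kernelPow_mul_le {W : α → ℝ≥0∞} {c : ℝ≥0∞}
    (hW : ∀ z, ∑' y, P z y * W y ≤ c * W z) (n : ℕ) (x : α) :
    ∑' y, kernelPow P n x y * W y ≤ c ^ n * W x := by
  induction n generalizing x with
  | zero => simp [kernelPow_zero, ite_mul]
  | succ n ih =>
    calc ∑' y, kernelPow P (n + 1) x y * W y
        = ∑' z, kernelPow P n x z * ∑' y, P z y * W y := by
          simp_rw [kernelPow_succ, ← ENNReal.tsum_mul_right, ← ENNReal.tsum_mul_left, mul_assoc]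
          exact ENNReal.tsum_comm
      _ ≤ ∑' z, kernelPow P n x z * (c * W z) := by gcongr with z; exact hW z
      _ = c * ∑' z, kernelPow P n x z * W z := by
          rw [← ENNReal.tsum_mul_left]; simp_rw [mul_left_comm]
      _ ≤ c ^ (n + 1) * W x := by
          rw [pow_succ', mul_assoc]; gcongr; exact ih x

theorem kernelPow_le_of_lyapunov {W : α → ℝ≥0∞} {c : ℝ≥0∞}
    (hW : ∀ z, ∑' y, P z y * W y ≤ c * W z) (n : ℕ) (x : α) {y : α}
    (hy₀ : W y ≠ 0) (hy : W y ≠ ⊤) : kernelPow P n x y ≤ c ^ n * W x / W y := by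
  rw [ENNReal.le_div_iff_mul_le (.inl hy₀) (.inl hy)]
  exact ENNReal.le_tsum y |>.trans (tsum_kernelPow_mul_le P hW n x)

theorem tsum_kernelPow_lt_top_of_lyapunov {W : α → ℝ≥0∞} {c : ℝ≥0∞}
    (hW : ∀ z, ∑' y, P z y * W y ≤ c * W z) (hc : c < 1) {x y : α}
    (hx : W x ≠ ⊤) (hy₀ : W y ≠ 0) (hy : W y ≠ ⊤) : ∑' n, kernelPow P n x y < ⊤ :=
  calc ∑' n, kernelPow P n x y ≤ ∑' n, c ^ n * (W x / W y) :=
        ENNReal.tsum_le_tsum fun n => (kernelPow_le_of_lyapunov P hW n x hy₀ hy).trans_eq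
          (mul_div_assoc _ _ _)
    _ = (1 - c)⁻¹ * (W x / W y) := by rw [ENNReal.tsum_mul_right, ENNReal.tsum_geometric]
    _ < ⊤ := ENNReal.mul_lt_top (ENNReal.inv_lt_top.2 (tsub_pos_of_lt hc))
        (ENNReal.div_lt_top hx hy₀)

theorem tsum_mul_kernelPow_add_sum_eq {o : α} {g : α → ℝ≥0∞}
    (hg : ∀ y, ∑' z, g z * P z y + (if o = y then 1 else 0) = g y) (N : ℕ) (y : α) :
    ∑' z, g z * kernelPow P N z y + ∑ n ∈ range N, kernelPow P n o y = g y := by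
  induction N generalizing y with
  | zero => simp [kernelPow_zero, mul_ite]
  | succ N ih =>
    have hA : ∑' z, g z * kernelPow P (N + 1) z y
        = ∑' w, (∑' z, g z * kernelPow P N z w) * P w y := by
      simp_rw [kernelPow_succ, ← ENNReal.tsum_mul_left, ← ENNReal.tsum_mul_right, mul_assoc]
      exact ENNReal.tsum_comm
    have hT : ∑ n ∈ range (N + 1), kernelPow P n o y
        = ∑' w, (∑ n ∈ range N, kernelPow P n o w) * P w y + (if o = y then 1 else 0) := by
      simp_rw [sum_range_succ', kernelPow_succ, Finset.sum_mul]
      rw [Summable.tsum_finsetSum fun _ _ => ENNReal.summable, kernelPow_zero]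
    rw [hA, hT, ← add_assoc, ← ENNReal.tsum_add]
    simp_rw [← add_mul, ih]
    exact hg y

theorem tsum_kernelPow_eq_of_poisson {o : α} {g : α → ℝ≥0∞}
    (hg : ∀ y, ∑' z, g z * P z y + (if o = y then 1 else 0) = g y)
    {W : α → ℝ≥0∞} {c : ℝ≥0∞} (hW : ∀ z, ∑' y, P z y * W y ≤ c * W z) (hc : c < 1)
    (hW₀ : ∀ y, W y ≠ 0) (hW_top : ∀ y, W y ≠ ⊤) (hgW : ∑' z, g z * W z ≠ ⊤) (y : α) :
    ∑' n, kernelPow P n o y = g y := by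
  have hrest (N : ℕ) : ∑' z, g z * kernelPow P N z y ≤ c ^ N * ((∑' z, g z * W z) / W y) :=
    calc ∑' z, g z * kernelPow P N z y ≤ ∑' z, g z * (c ^ N * W z / W y) := by
          gcongr with z
          exact kernelPow_le_of_lyapunov P hW N z (hW₀ y) (hW_top y)
      _ = c ^ N * ((∑' z, g z * W z) / W y) := by
          simp_rw [div_eq_mul_inv]
          rw [← ENNReal.tsum_mul_right, ← ENNReal.tsum_mul_left]
          exact tsum_congr fun z => by ring
  apply le_antisymm
  · rw [ENNReal.tsum_eq_iSup_nat]
    exact iSup_le fun N => le_add_self.trans (tsum_mul_kernelPow_add_sum_eq P hg N y).le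
  · have hlim : Tendsto (fun N => ∑' n, kernelPow P n o y + c ^ N * ((∑' z, g z * W z) / W y))
        atTop (𝓝 (∑' n, kernelPow P n o y)) := by
      simpa using tendsto_const_nhds.add (ENNReal.Tendsto.mul_const
        (ENNReal.tendsto_pow_atTop_nhds_zero_of_lt_one hc) (.inr (ENNReal.div_ne_top hgW (hW₀ y))))
    refine ge_of_tendsto' hlim fun N => ?_
    rw [← tsum_mul_kernelPow_add_sum_eq P hg N y, add_comm]
    exact add_le_add (ENNReal.sum_le_tsum _) (hrest N)

theorem ofReal_iterate_eq_kernelPow {p : α → α → ℝ} {pn : ℕ → α → α → ℝ} (hp : ∀ x y, 0 ≤ p x y)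
    (hfin : ∀ y, (fun z => p z y).HasFiniteSupport)
    (h0 : ∀ x y, pn 0 x y = if x = y then 1 else 0)
    (hs : ∀ n x y, pn (n + 1) x y = ∑' z, pn n x z * p z y) (n : ℕ) (x y : α) :
    ENNReal.ofReal (pn n x y) = kernelPow (fun z y => ENNReal.ofReal (p z y)) n x y := by
  have hpn (n : ℕ) (x y : α) : 0 ≤ pn n x y := by
    induction n generalizing y with
    | zero => rw [h0]; positivity
    | succ n ih => rw [hs]; exact tsum_nonneg fun z => mul_nonneg (ih z) (hp z y)
  induction n generalizing y with
  | zero => rw [h0, kernelPow_zero]; split_ifs <;> simp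
  | succ n ih =>
    have hsum : Summable fun z => pn n x z * p z y :=
      summable_of_hasFiniteSupport ((hfin y).fun_mul_right (pn n x))
    rw [hs, kernelPow_succ, ENNReal.ofReal_tsum_of_nonneg (fun z => mul_nonneg (hpn n x z) (hp z y))
      hsum]
    exact tsum_congr fun z => by rw [ENNReal.ofReal_mul (hpn n x z), ih]

end KernelPow

noncomputable section

namespace Polymer

variable {d : ℕ}

def exitRate (km : Fin d → ℝ) (K : ℝ) (x : List (Fin d)) : ℝ :=
  x.getLast?.elim K (km · + K)

def sigmaBar (kp km : Fin d → ℝ) (m : ℝ) (i : Fin d) : ℝ := kp i / (m + km i)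

def lyapunovWeight (km : Fin d → ℝ) (t : ℝ) (x : List (Fin d)) : ℝ :=
  (x.map fun i => km i / (t + km i)).prod

def rootGreen (kp km : Fin d → ℝ) (K m : ℝ) (x : List (Fin d)) : ℝ :=
  (x.map (sigmaBar kp km m)).prod * exitRate km K x / m

variable {kp km : Fin d → ℝ} {K m t : ℝ}

@[simp] theorem exitRate_nil : exitRate km K [] = K := rfl

@[simp] theorem exitRate_concat (x : List (Fin d)) (i : Fin d) :
    exitRate km K (x ++ [i]) = km i + K := by
  simp [exitRate]

theorem exitRate_le (hkm : ∀ i, 0 ≤ km i) (x : List (Fin d)) :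
    exitRate km K x ≤ K + ∑ i, km i := by
  rcases x.eq_nil_or_concat with rfl | ⟨w, i, rfl⟩
  · simpa using Finset.sum_nonneg fun i _ => hkm i
  · simpa [add_comm] using Finset.single_le_sum (fun j _ => hkm j) (Finset.mem_univ i)

theorem sigmaBar_mul_add (hm : 0 < m) (hkm : ∀ i, 0 < km i) (i : Fin d) :
    sigmaBar kp km m i * (m + km i) = kp i :=
  div_mul_cancel₀ _ (by linarith [hkm i])

@[simp] theorem lyapunovWeight_nil : lyapunovWeight km t [] = 1 := rfl

@[simp] theorem lyapunovWeight_concat (x : List (Fin d)) (i : Fin d) :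
    lyapunovWeight km t (x ++ [i]) = lyapunovWeight km t x * (km i / (t + km i)) := by
  simp [lyapunovWeight]

theorem lyapunovWeight_pos (ht : 0 ≤ t) (hkm : ∀ i, 0 < km i) (x : List (Fin d)) :
    0 < lyapunovWeight km t x :=
  List.prod_pos <| by
    simp only [List.mem_map]
    rintro _ ⟨i, -, rfl⟩
    have := hkm i
    positivity

@[simp] theorem rootGreen_nil : rootGreen kp km K m [] = K / m := by
  simp [rootGreen]

theorem rootGreen_concat (x : List (Fin d)) (i : Fin d) :
    rootGreen kp km K m (x ++ [i])
      = (x.map (sigmaBar kp km m)).prod * sigmaBar kp km m i * (km i + K) / m := by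
  simp [rootGreen]

end Polymer

end

structure IsPolymerKernel {d : ℕ} (kp km : Fin d → ℝ) (K : ℝ)
    (p : List (Fin d) → List (Fin d) → ℝ) : Prop where
  kp_pos : ∀ i, 0 < kp i
  km_pos : ∀ i, 0 < km i
  total : K = ∑ i, kp i
  root : ∀ i, p [] [i] = kp i / K
  up : ∀ x i j, p (x ++ [i]) (x ++ [i] ++ [j]) = kp j / (km i + K)
  down : ∀ x i, p (x ++ [i]) x = km i / (km i + K)
  zero : ∀ x y, (¬∃ i, y = x ++ [i]) → (¬∃ i, x = y ++ [i]) → p x y = 0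

namespace IsPolymerKernel

open Polymer

variable {d : ℕ} {kp km : Fin d → ℝ} {K : ℝ} {p : List (Fin d) → List (Fin d) → ℝ}

theorem p_append_singleton (hp : IsPolymerKernel kp km K p) (x : List (Fin d)) (j : Fin d) :
    p x (x ++ [j]) = kp j / exitRate km K x := by
  rcases x.eq_nil_or_concat with rfl | ⟨w, i, rfl⟩
  · exact hp.root j
  · simpa using hp.up w i j

theorem K_nonneg (hp : IsPolymerKernel kp km K p) : 0 ≤ K :=
  hp.total ▸ Finset.sum_nonneg fun i _ => (hp.kp_pos i).le

theorem nonneg (hp : IsPolymerKernel kp km K p) (x y : List (Fin d)) : 0 ≤ p x y := by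
  by_cases hup : ∃ j, y = x ++ [j]
  · obtain ⟨j, rfl⟩ := hup
    rcases x.eq_nil_or_concat with rfl | ⟨w, i, rfl⟩
    · exact hp.root j ▸ div_nonneg (hp.kp_pos j).le hp.K_nonneg
    · rw [List.concat_eq_append, hp.up]
      exact div_nonneg (hp.kp_pos j).le (add_nonneg (hp.km_pos i).le hp.K_nonneg)
  by_cases hdown : ∃ i, x = y ++ [i]
  · obtain ⟨i, rfl⟩ := hdown
    exact hp.down y i ▸ div_nonneg (hp.km_pos i).le (add_nonneg (hp.km_pos i).le hp.K_nonneg)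
  rw [hp.zero x y hup hdown]

theorem hasFiniteSupport_left (hp : IsPolymerKernel kp km K p) (y : List (Fin d)) :
    (fun z => p z y).HasFiniteSupport := by
  refine ((Set.finite_range fun j => y ++ [j]).union (Set.finite_singleton y.dropLast)).subset ?_
  intro z hz
  by_contra h
  simp only [Set.mem_union, Set.mem_range, Set.mem_singleton_iff, not_or, not_exists] at h
  refine hz (hp.zero z y (fun ⟨i, hi⟩ => h.2 (by simp [hi])) fun ⟨i, hi⟩ => h.1 i hi.symm)

theorem tsum_out_nil (hp : IsPolymerKernel kp km K p) {F : List (Fin d) → ℝ}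
    (hF : ∀ y, 0 ≤ F y) :
    ∑' y, ENNReal.ofReal (p [] y) * ENNReal.ofReal (F y)
      = ENNReal.ofReal (∑ j, kp j / K * F [j]) := by
  rw [tsum_eq_sum_append_singleton [] fun y hy => by
      rw [hp.zero [] y hy (by simp), ENNReal.ofReal_zero, zero_mul],
    ENNReal.sum_ofReal_mul_ofReal (fun _ => hp.nonneg _ _) fun _ => hF _]
  simp only [List.nil_append, hp.root]

theorem tsum_out_concat (hp : IsPolymerKernel kp km K p) {F : List (Fin d) → ℝ}
    (hF : ∀ y, 0 ≤ F y) (w : List (Fin d)) (i : Fin d) :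
    ∑' y, ENNReal.ofReal (p (w ++ [i]) y) * ENNReal.ofReal (F y)
      = ENNReal.ofReal (∑ j, kp j / (km i + K) * F (w ++ [i] ++ [j])
          + km i / (km i + K) * F w) := by
  rw [tsum_eq_sum_append_singleton_add (w ++ [i]) w
      (fun j h => by simpa using congrArg List.length h)
      fun y hy hyw => by
        rw [hp.zero _ y hy fun ⟨_, h⟩ => hyw (List.append_inj_left' h.symm rfl),
          ENNReal.ofReal_zero, zero_mul],
    ENNReal.sum_ofReal_mul_ofReal (fun _ => hp.nonneg _ _) fun _ => hF _,
    ← ENNReal.ofReal_mul (hp.nonneg _ _), ← ENNReal.ofReal_add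
      (Finset.sum_nonneg fun _ _ => mul_nonneg (hp.nonneg _ _) (hF _))
      (mul_nonneg (hp.nonneg _ _) (hF _))]
  simp only [hp.up, hp.down]

theorem tsum_in_nil (hp : IsPolymerKernel kp km K p) {F : List (Fin d) → ℝ}
    (hF : ∀ y, 0 ≤ F y) :
    ∑' z, ENNReal.ofReal (F z) * ENNReal.ofReal (p z [])
      = ENNReal.ofReal (∑ r, F [r] * (km r / (km r + K))) := by
  rw [tsum_eq_sum_append_singleton [] fun z hz => by
      rw [hp.zero z [] (by simp) hz, ENNReal.ofReal_zero, mul_zero],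
    ENNReal.sum_ofReal_mul_ofReal (fun _ => hF _) fun _ => hp.nonneg _ _]
  have hdown (r : Fin d) : p [r] [] = km r / (km r + K) := hp.down [] r
  simp only [List.nil_append, hdown]

theorem tsum_in_concat (hp : IsPolymerKernel kp km K p) {F : List (Fin d) → ℝ}
    (hF : ∀ y, 0 ≤ F y) (w : List (Fin d)) (j : Fin d) :
    ∑' z, ENNReal.ofReal (F z) * ENNReal.ofReal (p z (w ++ [j]))
      = ENNReal.ofReal (∑ r, F (w ++ [j] ++ [r]) * (km r / (km r + K))
          + F w * (kp j / exitRate km K w)) := by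
  rw [tsum_eq_sum_append_singleton_add (w ++ [j]) w
      (fun r h => by simpa using congrArg List.length h)
      fun z hz hzw => by
        rw [hp.zero z _ (fun ⟨_, h⟩ => hzw (List.append_inj_left' h.symm rfl)) hz,
          ENNReal.ofReal_zero, mul_zero],
    ENNReal.sum_ofReal_mul_ofReal (fun _ => hF _) fun _ => hp.nonneg _ _,
    ← ENNReal.ofReal_mul (hF _), ← ENNReal.ofReal_add
      (Finset.sum_nonneg fun _ _ => mul_nonneg (hF _) (hp.nonneg _ _))
      (mul_nonneg (hF _) (hp.nonneg _ _))]
  simp only [hp.down, hp.p_append_singleton]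

theorem sum_sigmaBar_mul_km (hp : IsPolymerKernel kp km K p) {m : ℝ} (hm : 0 < m)
    (hmeq : ∑ r, sigmaBar kp km m r = 1) : ∑ i, sigmaBar kp km m i * km i = K - m := by
  have h (i : Fin d) : sigmaBar kp km m i * km i = kp i - m * sigmaBar kp km m i := by
    rw [← sigmaBar_mul_add (kp := kp) hm hp.km_pos i]; ring
  rw [Finset.sum_congr rfl fun i _ => h i, Finset.sum_sub_distrib, ← Finset.mul_sum, hmeq,
    hp.total, mul_one]

theorem K_pos (hp : IsPolymerKernel kp km K p) {m : ℝ} (hm : 0 < m)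
    (hmeq : ∑ r, sigmaBar kp km m r = 1) : 0 < K := by
  have := hp.sum_sigmaBar_mul_km hm hmeq ▸ Finset.sum_nonneg fun i _ =>
    mul_nonneg (div_pos (hp.kp_pos i) (add_pos hm (hp.km_pos i))).le (hp.km_pos i).le
  linarith

theorem rootGreen_nonneg (hp : IsPolymerKernel kp km K p) {m : ℝ} (hm : 0 < m)
    (x : List (Fin d)) : 0 ≤ rootGreen kp km K m x := by
  have hσ : ∀ a ∈ x.map (sigmaBar kp km m), 0 ≤ a := by
    simp only [List.mem_map]
    rintro _ ⟨i, -, rfl⟩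
    exact (div_pos (hp.kp_pos i) (add_pos hm (hp.km_pos i))).le
  have hq : 0 ≤ exitRate km K x := by
    rcases x.eq_nil_or_concat with rfl | ⟨w, i, rfl⟩
    · exact hp.K_nonneg
    · simpa using add_nonneg (hp.km_pos i).le hp.K_nonneg
  exact div_nonneg (mul_nonneg (List.prod_nonneg hσ) hq) hm.le

theorem sum_rootGreen_mul_down (hp : IsPolymerKernel kp km K p) {m : ℝ} (hm : 0 < m)
    (hmeq : ∑ r, sigmaBar kp km m r = 1) (x : List (Fin d)) :
    ∑ r, rootGreen kp km K m (x ++ [r]) * (km r / (km r + K))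
      = (x.map (sigmaBar kp km m)).prod * (K - m) / m := by
  have h (r : Fin d) : rootGreen kp km K m (x ++ [r]) * (km r / (km r + K))
      = (x.map (sigmaBar kp km m)).prod / m * (sigmaBar kp km m r * km r) := by
    have := add_pos (hp.km_pos r) (hp.K_pos hm hmeq)
    rw [rootGreen_concat]
    field_simp
  rw [Finset.sum_congr rfl fun r _ => h r, ← Finset.mul_sum, hp.sum_sigmaBar_mul_km hm hmeq]
  ring

theorem rootGreen_poisson (hp : IsPolymerKernel kp km K p) {m : ℝ} (hm : 0 < m)
    (hmeq : ∑ r, sigmaBar kp km m r = 1) (y : List (Fin d)) :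
    ∑' z, ENNReal.ofReal (rootGreen kp km K m z) * ENNReal.ofReal (p z y)
      + (if [] = y then 1 else 0) = ENNReal.ofReal (rootGreen kp km K m y) := by
  rcases y.eq_nil_or_concat with rfl | ⟨w, j, rfl⟩
  · rw [hp.tsum_in_nil (hp.rootGreen_nonneg hm), if_pos rfl, ← ENNReal.ofReal_one,
      ← ENNReal.ofReal_add (Finset.sum_nonneg fun r _ => mul_nonneg (hp.rootGreen_nonneg hm _)
        (div_nonneg (hp.km_pos r).le (add_pos (hp.km_pos r) (hp.K_pos hm hmeq)).le)) zero_le_one]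
    congr 1
    have := hp.sum_rootGreen_mul_down hm hmeq []
    simp only [List.nil_append, List.map_nil, List.prod_nil] at this
    rw [this, rootGreen_nil]
    field_simp
    ring
  · rw [List.concat_eq_append, hp.tsum_in_concat (hp.rootGreen_nonneg hm), if_neg (by simp),
      add_zero, hp.sum_rootGreen_mul_down hm hmeq]
    congr 1
    have hq : exitRate km K w ≠ 0 := by
      rcases w.eq_nil_or_concat with rfl | ⟨v, i, rfl⟩
      · exact (hp.K_pos hm hmeq).ne'
      · simpa using (add_pos (hp.km_pos i) (hp.K_pos hm hmeq)).ne'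
    rw [rootGreen_concat, rootGreen]
    simp only [List.map_append, List.prod_append, List.map_cons, List.map_nil, List.prod_cons,
      List.prod_nil, mul_one]
    field_simp
    linear_combination -(w.map (sigmaBar kp km m)).prod * sigmaBar_mul_add (kp := kp) hm hp.km_pos j

theorem one_lt_sum_kp_div (hp : IsPolymerKernel kp km K p) {m t : ℝ} (ht : 0 < t) (htm : t < m)
    (hmeq : ∑ r, sigmaBar kp km m r = 1) : 1 < ∑ j, kp j / (t + km j) :=
  hmeq ▸ Finset.sum_lt_sum_of_nonempty (Finset.nonempty_of_sum_ne_zero (hmeq ▸ one_ne_zero))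
    fun i _ => div_lt_div_of_pos_left (hp.kp_pos i) (add_pos ht (hp.km_pos i)) (by linarith)

theorem sum_kp_mul_div (hp : IsPolymerKernel kp km K p) {t : ℝ} (ht : 0 ≤ t) :
    ∑ j, kp j * (km j / (t + km j)) = K - t * ∑ j, kp j / (t + km j) := by
  rw [hp.total, Finset.mul_sum, ← Finset.sum_sub_distrib]
  refine Finset.sum_congr rfl fun j _ => ?_
  have := add_pos_of_nonneg_of_pos ht (hp.km_pos j)
  field_simp
  ring

theorem sum_kp_div_mul_lyapunovWeight_nil (hp : IsPolymerKernel kp km K p) {t : ℝ} (ht : 0 ≤ t)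
    (hK : 0 < K) :
    ∑ j, kp j / K * lyapunovWeight km t [j] = 1 - t * (∑ j, kp j / (t + km j)) / K := by
  rw [← div_self hK.ne', ← sub_div, ← hp.sum_kp_mul_div ht, Finset.sum_div]
  simp [lyapunovWeight, div_mul_eq_mul_div]

theorem sum_kp_div_mul_lyapunovWeight_concat (hp : IsPolymerKernel kp km K p) {t : ℝ}
    (ht : 0 < t) (hK : 0 < K) (w : List (Fin d)) (i : Fin d) :
    ∑ j, kp j / (km i + K) * lyapunovWeight km t (w ++ [i] ++ [j])
        + km i / (km i + K) * lyapunovWeight km t w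
      = (1 - t * ((∑ j, kp j / (t + km j)) - 1) / (km i + K))
          * lyapunovWeight km t (w ++ [i]) := by
  simp only [lyapunovWeight_concat]
  have hsum : ∑ j, kp j / (km i + K)
        * (lyapunovWeight km t w * (km i / (t + km i)) * (km j / (t + km j)))
      = lyapunovWeight km t w * (km i / (t + km i)) / (km i + K)
          * (K - t * ∑ j, kp j / (t + km j)) := by
    rw [← hp.sum_kp_mul_div ht.le, Finset.mul_sum]
    exact Finset.sum_congr rfl fun j _ => by ring
  have := add_pos ht (hp.km_pos i)
  have := add_pos (hp.km_pos i) hK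
  rw [hsum]
  field_simp
  ring

theorem exists_lyapunov_drift (hp : IsPolymerKernel kp km K p) {m t : ℝ} (ht : 0 < t)
    (htm : t < m) (hmeq : ∑ r, sigmaBar kp km m r = 1) :
    ∃ c < 1, ∀ z, ∑' y, ENNReal.ofReal (p z y) * ENNReal.ofReal (lyapunovWeight km t y)
      ≤ c * ENNReal.ofReal (lyapunovWeight km t z) := by
  set s := ∑ j, kp j / (t + km j)
  set B := ∑ i, km i
  set δ := t * (s - 1) / (K + B)
  have hK := hp.K_pos (ht.trans htm) hmeq
  have hB : 0 ≤ B := Finset.sum_nonneg fun i _ => (hp.km_pos i).le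
  have hs := hp.one_lt_sum_kp_div ht htm hmeq
  have hW := fun y => (lyapunovWeight_pos ht.le hp.km_pos y).le
  refine ⟨ENNReal.ofReal (1 - δ), ENNReal.ofReal_lt_one.2 (by
    have : 0 < δ := div_pos (mul_pos ht (by linarith)) (by linarith); linarith), fun z => ?_⟩
  rcases z.eq_nil_or_concat with rfl | ⟨w, i, rfl⟩
  · rw [hp.tsum_out_nil hW, lyapunovWeight_nil, ENNReal.ofReal_one, mul_one,
      hp.sum_kp_div_mul_lyapunovWeight_nil ht.le hK]
    refine ENNReal.ofReal_le_ofReal (sub_le_sub_left ?_ 1)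
    exact div_le_div₀ (by positivity) (by nlinarith) hK (by linarith)
  · rw [List.concat_eq_append, hp.tsum_out_concat hW, ← ENNReal.ofReal_mul' (hW _),
      hp.sum_kp_div_mul_lyapunovWeight_concat ht hK]
    refine ENNReal.ofReal_le_ofReal (mul_le_mul_of_nonneg_right (sub_le_sub_left ?_ 1) (hW _))
    have hkmB : km i ≤ B := Finset.single_le_sum (fun j _ => (hp.km_pos j).le) (Finset.mem_univ i)
    exact div_le_div_of_nonneg_left (by nlinarith) (by linarith [hp.km_pos i]) (by linarith)

theorem tsum_rootGreen_mul_lyapunovWeight_ne_top (hp : IsPolymerKernel kp km K p) {m t : ℝ}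
    (ht : 0 < t) (hm : 0 < m) (hmeq : ∑ r, sigmaBar kp km m r = 1) :
    ∑' z, ENNReal.ofReal (rootGreen kp km K m z) * ENNReal.ofReal (lyapunovWeight km t z) ≠ ⊤ := by
  set a : Fin d → ℝ := fun i => sigmaBar kp km m i * (km i / (t + km i))
  have hσ (i : Fin d) : 0 < sigmaBar kp km m i := div_pos (hp.kp_pos i) (add_pos hm (hp.km_pos i))
  have ha (i : Fin d) : a i < sigmaBar kp km m i :=
    mul_lt_of_lt_one_right (hσ i) ((div_lt_one (add_pos ht (hp.km_pos i))).2 (by linarith))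
  have ha₀ (i : Fin d) : 0 ≤ a i :=
    mul_nonneg (hσ i).le (div_pos (hp.km_pos i) (add_pos ht (hp.km_pos i))).le
  have hbound (z : List (Fin d)) :
      ENNReal.ofReal (rootGreen kp km K m z) * ENNReal.ofReal (lyapunovWeight km t z)
        ≤ ENNReal.ofReal ((K + ∑ i, km i) / m) * (z.map fun i => ENNReal.ofReal (a i)).prod := by
    rw [← ENNReal.ofReal_mul (hp.rootGreen_nonneg hm z), ← ENNReal.ofReal_list_prod_map ha₀,
      ← ENNReal.ofReal_mul (div_nonneg (add_nonneg hp.K_nonneg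
        (Finset.sum_nonneg fun i _ => (hp.km_pos i).le)) hm.le)]
    refine ENNReal.ofReal_le_ofReal ?_
    have hprod : rootGreen kp km K m z * lyapunovWeight km t z
        = (z.map a).prod * exitRate km K z / m := by
      simp only [rootGreen, lyapunovWeight, a, List.prod_map_mul]
      ring
    rw [hprod, mul_div_assoc, mul_comm]
    gcongr
    · exact List.prod_nonneg fun _ hx => by obtain ⟨i, -, rfl⟩ := List.mem_map.1 hx; exact ha₀ i
    · exact exitRate_le (fun i => (hp.km_pos i).le) z
  have hlt : ∑ i, ENNReal.ofReal (a i) < 1 := by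
    rw [← ENNReal.ofReal_sum_of_nonneg fun i _ => ha₀ i, ENNReal.ofReal_lt_one, ← hmeq]
    exact Finset.sum_lt_sum_of_nonempty (Finset.nonempty_of_sum_ne_zero (hmeq ▸ one_ne_zero))
      fun i _ => ha i
  refine (lt_of_le_of_lt (ENNReal.tsum_le_tsum hbound) ?_).ne
  rw [ENNReal.tsum_mul_left, ENNReal.tsum_list_prod]
  exact ENNReal.mul_lt_top ENNReal.ofReal_lt_top (ENNReal.inv_lt_top.2 (tsub_pos_of_lt hlt))

theorem tsum_kernelPow_lt_top (hp : IsPolymerKernel kp km K p) {m : ℝ} (hm : 0 < m)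
    (hmeq : ∑ r, sigmaBar kp km m r = 1) (x y : List (Fin d)) :
    ∑' n, kernelPow (fun z y => ENNReal.ofReal (p z y)) n x y < ⊤ := by
  obtain ⟨c, hc, hW⟩ := hp.exists_lyapunov_drift (half_pos hm) (half_lt_self hm) hmeq
  exact tsum_kernelPow_lt_top_of_lyapunov _ hW hc ENNReal.ofReal_ne_top
    (ENNReal.ofReal_pos.2 (lyapunovWeight_pos (half_pos hm).le hp.km_pos y)).ne'
    ENNReal.ofReal_ne_top

theorem tsum_kernelPow_nil_eq_rootGreen (hp : IsPolymerKernel kp km K p) {m : ℝ} (hm : 0 < m)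
    (hmeq : ∑ r, sigmaBar kp km m r = 1) (y : List (Fin d)) :
    ∑' n, kernelPow (fun z y => ENNReal.ofReal (p z y)) n [] y
      = ENNReal.ofReal (rootGreen kp km K m y) := by
  obtain ⟨c, hc, hW⟩ := hp.exists_lyapunov_drift (half_pos hm) (half_lt_self hm) hmeq
  exact tsum_kernelPow_eq_of_poisson _ (hp.rootGreen_poisson hm hmeq) hW hc
    (fun y => (ENNReal.ofReal_pos.2 (lyapunovWeight_pos (half_pos hm).le hp.km_pos y)).ne')
    (fun _ => ENNReal.ofReal_ne_top)
    (hp.tsum_rootGreen_mul_lyapunovWeight_ne_top (half_pos hm) hm hmeq) y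

end IsPolymerKernel

theorem stmt11_general (d : ℕ) (kp km : Fin d → ℝ)
    (hkp : ∀ i, 0 < kp i) (hkm : ∀ i, 0 < km i)
    (K : ℝ) (hK : K = ∑ i : Fin d, kp i)
    (m : ℝ) (hm : 0 < m) (hmeq : ∑ r : Fin d, kp r / (m + km r) = 1)
    (σ : Fin d → ℝ) (hσ : ∀ i, σ i = kp i / (m + km i))
    (p : List (Fin d) → List (Fin d) → ℝ)
    (hp_root : ∀ i : Fin d, p [] [i] = kp i / K)
    (hp_up : ∀ (x : List (Fin d)) (i j : Fin d),
      p (x ++ [i]) (x ++ [i] ++ [j]) = kp j / (km i + K))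
    (hp_down : ∀ (x : List (Fin d)) (i : Fin d), p (x ++ [i]) x = km i / (km i + K))
    (hp_zero : ∀ x y : List (Fin d),
      (¬ ∃ i : Fin d, y = x ++ [i]) → (¬ ∃ i : Fin d, x = y ++ [i]) → p x y = 0)
    (pn : ℕ → List (Fin d) → List (Fin d) → ℝ)
    (hpn0 : ∀ x y : List (Fin d), pn 0 x y = if x = y then 1 else 0)
    (hpns : ∀ (n : ℕ) (x y : List (Fin d)),
      pn (n + 1) x y = ∑' z : List (Fin d), pn n x z * p z y) :
    (∀ x y : List (Fin d), (∑' n : ℕ, ENNReal.ofReal (pn n x y)) < ⊤) ∧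
    (∀ (x : List (Fin d)) (i j : Fin d),
      (∑' n : ℕ, ENNReal.ofReal (pn n [] (x ++ [j]))) * ENNReal.ofReal (σ i * (km i + K))
        = (∑' n : ℕ, ENNReal.ofReal (pn n [] (x ++ [i])))
            * ENNReal.ofReal (σ j * (km j + K))) := by
  obtain rfl : σ = Polymer.sigmaBar kp km m := funext hσ
  have hp : IsPolymerKernel kp km K p := ⟨hkp, hkm, hK, hp_root, hp_up, hp_down, hp_zero⟩
  have hG (x y : List (Fin d)) : ∑' n, ENNReal.ofReal (pn n x y)
      = ∑' n, kernelPow (fun z y => ENNReal.ofReal (p z y)) n x y := tsum_congr fun n =>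
    ofReal_iterate_eq_kernelPow hp.nonneg hp.hasFiniteSupport_left hpn0 hpns n x y
  refine ⟨fun x y => hG x y ▸ hp.tsum_kernelPow_lt_top hm hmeq x y, fun x i j => ?_⟩
  rw [hG, hG, hp.tsum_kernelPow_nil_eq_rootGreen hm hmeq,
    hp.tsum_kernelPow_nil_eq_rootGreen hm hmeq, ← ENNReal.ofReal_mul (hp.rootGreen_nonneg hm _),
    ← ENNReal.ofReal_mul (hp.rootGreen_nonneg hm _), Polymer.rootGreen_concat,
    Polymer.rootGreen_concat]
  congr 1
  ring

/-- Green function ratio formula: assume `α = Σ i, k⁺ i / k⁻ i > 1`, let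
`m` be the unique positive real with `Σ r, k⁺ r / (m + k⁻ r) = 1`, and set
`σ̄ i = k⁺ i / (m + k⁻ i)`.  Then `G(x,y) < ∞` for all `x, y`, and for every state `x` and
all monomer types `i, j`:
`G(o, x·j) · σ̄ i · (k⁻ i + K) = G(o, x·i) · σ̄ j · (k⁻ j + K)`, i.e.
`G(o, x·j)/G(o, x·i) = σ̄ j (k⁻ j + K) / (σ̄ i (k⁻ i + K))`. -/
theorem stmt11 (d : ℕ) (hd : 1 ≤ d) (kp km : Fin d → ℝ)
    (hkp : ∀ i, 0 < kp i) (hkm : ∀ i, 0 < km i)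
    (K : ℝ) (hK : K = ∑ i : Fin d, kp i)
    (hα : 1 < ∑ i : Fin d, kp i / km i)
    (m : ℝ) (hm : 0 < m) (hmeq : ∑ r : Fin d, kp r / (m + km r) = 1)
    (σ : Fin d → ℝ) (hσ : ∀ i, σ i = kp i / (m + km i))
    (p : List (Fin d) → List (Fin d) → ℝ)
    (hp_root : ∀ i : Fin d, p [] [i] = kp i / K)
    (hp_up : ∀ (x : List (Fin d)) (i j : Fin d),
      p (x ++ [i]) (x ++ [i] ++ [j]) = kp j / (km i + K))
    (hp_down : ∀ (x : List (Fin d)) (i : Fin d), p (x ++ [i]) x = km i / (km i + K))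
    (hp_zero : ∀ x y : List (Fin d),
      (¬ ∃ i : Fin d, y = x ++ [i]) → (¬ ∃ i : Fin d, x = y ++ [i]) → p x y = 0)
    (pn : ℕ → List (Fin d) → List (Fin d) → ℝ)
    (hpn0 : ∀ x y : List (Fin d), pn 0 x y = if x = y then 1 else 0)
    (hpns : ∀ (n : ℕ) (x y : List (Fin d)),
      pn (n + 1) x y = ∑' z : List (Fin d), pn n x z * p z y) :
    (∀ x y : List (Fin d), (∑' n : ℕ, ENNReal.ofReal (pn n x y)) < ⊤) ∧
    (∀ (x : List (Fin d)) (i j : Fin d),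
      (∑' n : ℕ, ENNReal.ofReal (pn n [] (x ++ [j]))) * ENNReal.ofReal (σ i * (km i + K))
        = (∑' n : ℕ, ENNReal.ofReal (pn n [] (x ++ [i])))
            * ENNReal.ofReal (σ j * (km j + K))) :=
  stmt11_general d kp km hkp hkm K hK m hm hmeq σ hσ p hp_root hp_up hp_down hp_zero pn hpn0 hpns
end

section
/- Cesàro limit of expected cone-type visit counts: assume α > 1, let m be the unique positive real with Σᵣ k⁺(r)/(m + k⁻(r)) = 1, and set σ̄ᵢ = k⁺(i)/(m + k⁻(i)). For each i ∈ Fin d and n ∈ ℕ define Eᵢ(n) = Σ_{ℓ=0}^{n} Σ_{x ∈ 𝒯} pˡ(o, x·i) (a finite quantity, being the expected number of visits during the first n+1 steps to states whose last letter is i). Then lim_{n→∞} Eᵢ(n)/n = σ̄ᵢ·(k⁻(i) + K) / (Σⱼ σ̄ⱼ·(k⁻(j) + K)). -/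
/-!
A Poisson-equation argument. If `f` is bounded and `P f = f + 𝟙[last letter = i] - c`, then
`Eₗ f = Σ_y pˡ(o, y) f(y)` satisfies `Eₗ₊₁ f = Eₗ f + Σ_x pˡ(o, x·i) - c`, so the partial sums
in question are `c (n + 1) + Eₙ₊₁ f - E₀ f = c (n + 1) + O(1)`.

The solution is built letter by letter: `f(x·j)` is an affine function of `f(x)` with slope
`k⁻(j)/(m + k⁻(j)) < 1`, which keeps `f` bounded. By the equation defining `m`,
`Σ_r k⁺(r) f(x·r) = (K - m) f(x) - c K` for every word `x`, and the Poisson equation at `o` and at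
`x·j` then reduces to a linear identity; it is the normalisation `Σ_j σ̄_j (k⁻(j) + K) = 2K - m`
that fixes `c`.
-/

open Filter Topology Finset

lemma tendsto_sum_range_succ_div_of_bounded_telescoping {a e : ℕ → ℝ} {c C : ℝ}
    (hstep : ∀ ℓ, e (ℓ + 1) = e ℓ + a ℓ - c) (he : ∀ ℓ, |e ℓ| ≤ C) :
    Tendsto (fun n : ℕ => (∑ ℓ ∈ range (n + 1), a ℓ) / n) atTop (𝓝 c) := by
  have hsum : ∀ n, ∑ ℓ ∈ range n, a ℓ = c * n + (e n - e 0) := fun n => by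
    have ha : ∀ ℓ, a ℓ = (e (ℓ + 1) - e ℓ) + c := fun ℓ => by rw [hstep]; ring
    simp only [ha, sum_add_distrib, sum_range_sub, sum_const, card_range, nsmul_eq_mul]
    ring
  suffices Tendsto (fun n : ℕ => (∑ ℓ ∈ range (n + 1), a ℓ) / n - c) atTop (𝓝 0) by
    simpa using this.add_const c
  refine squeeze_zero_norm' ?_ (tendsto_const_div_atTop_nhds_zero_nat (|c| + 2 * C))
  filter_upwards [eventually_gt_atTop 0] with n hn
  have hn' : (0 : ℝ) < n := Nat.cast_pos.2 hn
  have hid : (∑ ℓ ∈ range (n + 1), a ℓ) / n - c = (c + (e (n + 1) - e 0)) / n := by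
    rw [hsum]; push_cast; field_simp; ring
  rw [Real.norm_eq_abs, hid, abs_div, abs_of_pos hn']
  gcongr
  calc |c + (e (n + 1) - e 0)| ≤ |c| + (|e (n + 1)| + |e 0|) :=
        (abs_add_le _ _).trans (add_le_add_right (abs_sub _ _) _)
    _ ≤ |c| + 2 * C := by linarith [he (n + 1), he 0]

variable {α : Type*}

section Summation

variable [Finite α] {F : List α → ℝ} {n : ℕ}

lemma eq_zero_of_notMem_finite_length_le (h : ∀ y, F y ≠ 0 → y.length ≤ n) {y : List α}
    (hy : y ∉ (List.finite_length_le α n).toFinset) : F y = 0 :=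
  not_ne_iff.mp fun hne => hy (by simpa using h y hne)

lemma summable_of_length_le (h : ∀ y, F y ≠ 0 → y.length ≤ n) : Summable F :=
  summable_of_ne_finset_zero fun _ => eq_zero_of_notMem_finite_length_le h

lemma tsum_eq_sum_of_length_le (h : ∀ y, F y ≠ 0 → y.length ≤ n) :
    ∑' y, F y = ∑ y ∈ (List.finite_length_le α n).toFinset, F y :=
  tsum_eq_sum fun _ => eq_zero_of_notMem_finite_length_le h

end Summation

noncomputable def transitionPow {β : Type*} [DecidableEq β] (p : β → β → ℝ) : ℕ → β → β → ℝ
  | 0, x, y => if x = y then 1 else 0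
  | n + 1, x, y => ∑' z, transitionPow p n x z * p z y

lemma eq_transitionPow {β : Type*} [DecidableEq β] {p : β → β → ℝ} {pn : ℕ → β → β → ℝ}
    (h0 : ∀ x y, pn 0 x y = if x = y then 1 else 0)
    (hsucc : ∀ n x y, pn (n + 1) x y = ∑' z, pn n x z * p z y) :
    pn = transitionPow p := by
  funext n x y
  induction n generalizing y with
  | zero => exact h0 x y
  | succ n ih => simp only [hsucc, ih, transitionPow]

lemma transitionPow_nonneg {β : Type*} [DecidableEq β] {p : β → β → ℝ}
    (hp : ∀ x y, 0 ≤ p x y) : ∀ n x y, 0 ≤ transitionPow p n x y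
  | 0, x, y => by unfold transitionPow; split <;> norm_num
  | n + 1, x, y => tsum_nonneg fun z => mul_nonneg (transitionPow_nonneg hp n x z) (hp z y)

section GrowingKernel

variable [DecidableEq α] {p : List α → List α → ℝ}

lemma transitionPow_nil_eq_zero (hgrow : ∀ x y, p x y ≠ 0 → y.length ≤ x.length + 1)
    {ℓ : ℕ} {y : List α} (hy : ℓ < y.length) : transitionPow p ℓ [] y = 0 := by
  induction ℓ generalizing y with
  | zero =>
    rw [transitionPow, if_neg]
    rintro rfl
    simp at hy
  | succ ℓ ih =>
    refine (tsum_congr fun z => ?_).trans tsum_zero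
    by_cases hz : ℓ < z.length
    · rw [ih hz, zero_mul]
    · rw [not_ne_iff.mp (mt (hgrow z y) (by omega)), mul_zero]

lemma length_le_of_transitionPow_mul_ne_zero
    (hgrow : ∀ x y, p x y ≠ 0 → y.length ≤ x.length + 1) {ℓ : ℕ} {g : List α → ℝ}
    {y : List α} (hy : transitionPow p ℓ [] y * g y ≠ 0) : y.length ≤ ℓ :=
  not_lt.mp fun h => left_ne_zero_of_mul hy (transitionPow_nil_eq_zero hgrow h)

variable [Finite α]

lemma summable_transitionPow_mul (hgrow : ∀ x y, p x y ≠ 0 → y.length ≤ x.length + 1)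
    (ℓ : ℕ) (g : List α → ℝ) : Summable fun y => transitionPow p ℓ [] y * g y :=
  summable_of_length_le fun _ => length_le_of_transitionPow_mul_ne_zero hgrow

lemma tsum_transitionPow_succ_mul (hgrow : ∀ x y, p x y ≠ 0 → y.length ≤ x.length + 1)
    (ℓ : ℕ) (g : List α → ℝ) :
    ∑' y, transitionPow p (ℓ + 1) [] y * g y
      = ∑' z, transitionPow p ℓ [] z * ∑' y, p z y * g y := by
  have hfin : ∀ F : List α → ℝ, ∑' z, transitionPow p ℓ [] z * F z
      = ∑ z ∈ (List.finite_length_le α ℓ).toFinset, transitionPow p ℓ [] z * F z := fun F =>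
    tsum_eq_sum_of_length_le fun _ => length_le_of_transitionPow_mul_ne_zero hgrow
  have hrow : ∀ z, Summable fun y => transitionPow p ℓ [] z * (p z y * g y) := fun z =>
    (summable_of_length_le fun y hy => hgrow z y (left_ne_zero_of_mul hy)).mul_left _
  simp only [transitionPow, hfin fun z => p z _, sum_mul, mul_assoc]
  rw [Summable.tsum_finsetSum fun z _ => hrow z, hfin]
  simp only [tsum_mul_left]

lemma tsum_transitionPow (hgrow : ∀ x y, p x y ≠ 0 → y.length ≤ x.length + 1)
    (hsum : ∀ x, ∑' y, p x y = 1) (ℓ : ℕ) : ∑' y, transitionPow p ℓ [] y = 1 := by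
  induction ℓ with
  | zero => simp [transitionPow]
  | succ ℓ ih => simpa [hsum, ih] using tsum_transitionPow_succ_mul hgrow ℓ 1

lemma abs_tsum_transitionPow_mul_le (hgrow : ∀ x y, p x y ≠ 0 → y.length ≤ x.length + 1)
    (hp : ∀ x y, 0 ≤ p x y) (hsum : ∀ x, ∑' y, p x y = 1) {f : List α → ℝ} {C : ℝ}
    (hf : ∀ y, |f y| ≤ C) (ℓ : ℕ) : |∑' y, transitionPow p ℓ [] y * f y| ≤ C := by
  have hconst : ∀ a : ℝ, ∑' y, transitionPow p ℓ [] y * a = a := fun a => by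
    rw [tsum_mul_right, tsum_transitionPow hgrow hsum, one_mul]
  have hmono : ∀ g h : List α → ℝ, (∀ y, g y ≤ h y) →
      ∑' y, transitionPow p ℓ [] y * g y ≤ ∑' y, transitionPow p ℓ [] y * h y :=
    fun g h hgh => Summable.tsum_le_tsum
      (fun y => mul_le_mul_of_nonneg_left (hgh y) (transitionPow_nonneg hp ℓ [] y))
      (summable_transitionPow_mul hgrow ℓ g) (summable_transitionPow_mul hgrow ℓ h)
  refine abs_le.mpr ⟨?_, ?_⟩
  · have := hmono (fun _ => -C) f fun y => neg_le_of_abs_le (hf y)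
    rwa [hconst] at this
  · have := hmono f (fun _ => C) fun y => le_of_abs_le (hf y)
    rwa [hconst] at this

lemma tsum_transitionPow_succ_mul_of_poisson
    (hgrow : ∀ x y, p x y ≠ 0 → y.length ≤ x.length + 1) (hsum : ∀ x, ∑' y, p x y = 1)
    {f g : List α → ℝ} {c : ℝ} (hpois : ∀ z, ∑' y, p z y * f y = f z + g z - c) (ℓ : ℕ) :
    ∑' y, transitionPow p (ℓ + 1) [] y * f y
      = ∑' y, transitionPow p ℓ [] y * f y + ∑' y, transitionPow p ℓ [] y * g y - c := by
  have hE := summable_transitionPow_mul hgrow ℓ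
  simp only [tsum_transitionPow_succ_mul hgrow, hpois, mul_sub, mul_add]
  rw [Summable.tsum_sub ((hE f).add (hE g)) (hE fun _ => c), Summable.tsum_add (hE f) (hE g),
    tsum_mul_right, tsum_transitionPow hgrow hsum, one_mul]

theorem tendsto_cesaro_of_poisson (hgrow : ∀ x y, p x y ≠ 0 → y.length ≤ x.length + 1)
    (hp : ∀ x y, 0 ≤ p x y) (hsum : ∀ x, ∑' y, p x y = 1) {f g : List α → ℝ} {c C : ℝ}
    (hpois : ∀ z, ∑' y, p z y * f y = f z + g z - c) (hf : ∀ y, |f y| ≤ C) :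
    Tendsto (fun n : ℕ => (∑ ℓ ∈ range (n + 1), ∑' y, transitionPow p ℓ [] y * g y) / n)
      atTop (𝓝 c) :=
  tendsto_sum_range_succ_div_of_bounded_telescoping
    (tsum_transitionPow_succ_mul_of_poisson hgrow hsum hpois)
    (abs_tsum_transitionPow_mul_le hgrow hp hsum hf)

end GrowingKernel

lemma tsum_mul_indicator_range_append_singleton (F : List α → ℝ) (i : α) :
    ∑' y, F y * (Set.range (· ++ [i])).indicator 1 y = ∑' x, F (x ++ [i]) := by
  simp only [← Set.indicator_mul_right, Pi.one_apply, mul_one, ← _root_.tsum_subtype]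
  exact tsum_range F (List.append_left_injective [i])

lemma abs_foldl_affine_le {φ ρ : α → ℝ} {M q : ℝ} (hφ : ∀ j, |φ j| ≤ M) (hρ : ∀ j, |ρ j| ≤ q)
    (hq : q < 1) : ∀ (x : List α) {t : ℝ}, |t| ≤ M / (1 - q) →
      |x.foldl (fun t j => φ j + ρ j * t) t| ≤ M / (1 - q)
  | [], _, ht => ht
  | j :: x, t, ht => abs_foldl_affine_le hφ hρ hq x <| by
    have : 1 - q ≠ 0 := by linarith
    calc |φ j + ρ j * t| ≤ |φ j| + |ρ j| * |t| := (abs_add_le _ _).trans_eq (by rw [abs_mul])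
      _ ≤ M + q * (M / (1 - q)) :=
        add_le_add (hφ j) (mul_le_mul (hρ j) ht (abs_nonneg _) ((abs_nonneg _).trans (hρ j)))
      _ = M / (1 - q) := by field_simp; ring

structure IsPolymerChain (kp km : α → ℝ) (K : ℝ) (p : List α → List α → ℝ) : Prop where
  root : ∀ i, p [] [i] = kp i / K
  up : ∀ x i j, p (x ++ [i]) (x ++ [i] ++ [j]) = kp j / (km i + K)
  down : ∀ x i, p (x ++ [i]) x = km i / (km i + K)
  eq_zero : ∀ x y, (¬ ∃ i, y = x ++ [i]) → (¬ ∃ i, x = y ++ [i]) → p x y = 0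

namespace IsPolymerChain

variable {kp km : α → ℝ} {K : ℝ} {p : List α → List α → ℝ}

lemma length_le (hp : IsPolymerChain kp km K p) (x y : List α) (h : p x y ≠ 0) :
    y.length ≤ x.length + 1 := by
  by_contra hlen
  refine h (hp.eq_zero x y ?_ ?_) <;> rintro ⟨r, rfl⟩ <;> simp at hlen
  omega

lemma nonneg (hp : IsPolymerChain kp km K p) (hkp : ∀ i, 0 ≤ kp i) (hkm : ∀ i, 0 ≤ km i)
    (hK : 0 ≤ K) (x y : List α) : 0 ≤ p x y := by
  by_cases hup : ∃ r, y = x ++ [r]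
  · obtain ⟨r, rfl⟩ := hup
    rcases x.eq_nil_or_concat' with rfl | ⟨x, j, rfl⟩
    · rw [List.nil_append, hp.root]
      exact div_nonneg (hkp r) hK
    · rw [hp.up]
      exact div_nonneg (hkp r) (add_nonneg (hkm j) hK)
  by_cases hdown : ∃ r, x = y ++ [r]
  · obtain ⟨r, rfl⟩ := hdown
    rw [hp.down]
    exact div_nonneg (hkm r) (add_nonneg (hkm r) hK)
  · rw [hp.eq_zero x y hup hdown]

variable [Fintype α]

lemma tsum_nil_mul (hp : IsPolymerChain kp km K p) (g : List α → ℝ) :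
    ∑' y, p [] y * g y = ∑ r, kp r / K * g [r] := by
  have hsupp : Function.support (fun y => p [] y * g y) ⊆ Set.range fun r : α => [r] := by
    intro y hy
    by_contra hr
    refine left_ne_zero_of_mul hy (hp.eq_zero [] y ?_ ?_)
    · rintro ⟨r, rfl⟩
      exact hr ⟨r, rfl⟩
    · rintro ⟨r, hr'⟩
      simp at hr'
  rw [← List.singleton_injective.tsum_eq hsupp, tsum_fintype]
  simp only [hp.root]

lemma tsum_append_singleton_mul (hp : IsPolymerChain kp km K p) (x : List α) (j : α)
    (g : List α → ℝ) :
    ∑' y, p (x ++ [j]) y * g y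
      = km j / (km j + K) * g x + ∑ r, kp r / (km j + K) * g (x ++ [j] ++ [r]) := by
  let e : Option α → List α := fun o => o.elim x fun r => x ++ [j] ++ [r]
  have he : Function.Injective e := by
    rintro (_ | r) (_ | r') h <;> simp [e] at h ⊢
    exact h
  have hsupp : Function.support (fun y => p (x ++ [j]) y * g y) ⊆ Set.range e := by
    intro y hy
    by_contra hr
    refine left_ne_zero_of_mul hy (hp.eq_zero _ y ?_ ?_)
    · rintro ⟨r, rfl⟩
      exact hr ⟨some r, rfl⟩
    · rintro ⟨r, hr'⟩
      obtain ⟨rfl, -⟩ := List.append_inj' hr' rfl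
      exact hr ⟨none, rfl⟩
  rw [← he.tsum_eq hsupp, tsum_fintype, Fintype.sum_option]
  simp only [e, Option.elim, hp.down, hp.up]

lemma tsum_eq_one (hp : IsPolymerChain kp km K p) (hK : K = ∑ i, kp i) (hK0 : 0 < K)
    (hkm : ∀ i, 0 ≤ km i) (x : List α) : ∑' y, p x y = 1 := by
  rcases x.eq_nil_or_concat' with rfl | ⟨x, j, rfl⟩
  · simpa [← sum_div, ← hK, hK0.ne'] using hp.tsum_nil_mul 1
  · have : km j + K ≠ 0 := by linarith [hkm j]
    simpa [← sum_div, ← hK, ← add_div, this] using hp.tsum_append_singleton_mul x j 1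

end IsPolymerChain

lemma sum_mul_div_add_eq_sub [Fintype α] {kp km : α → ℝ} {K m : ℝ} (hK : K = ∑ r, kp r)
    (hmk : ∀ r, m + km r ≠ 0) (hmeq : ∑ r, kp r / (m + km r) = 1) :
    ∑ r, kp r * km r / (m + km r) = K - m := by
  have h : ∀ r, kp r * km r / (m + km r) = kp r - m * (kp r / (m + km r)) := fun r => by
    field_simp [hmk r]
    ring
  rw [sum_congr rfl fun r _ => h r, sum_sub_distrib, ← mul_sum, hmeq, hK, mul_one]

lemma sum_div_add_mul_add_eq_two_mul_sub [Fintype α] {kp km : α → ℝ} {K m : ℝ}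
    (hK : K = ∑ r, kp r) (hmk : ∀ r, m + km r ≠ 0) (hmeq : ∑ r, kp r / (m + km r) = 1) :
    ∑ r, kp r / (m + km r) * (km r + K) = 2 * K - m := by
  have h : ∀ r, kp r / (m + km r) * (km r + K)
      = kp r * km r / (m + km r) + K * (kp r / (m + km r)) := fun r => by ring
  rw [sum_congr rfl fun r _ => h r, sum_add_distrib, ← mul_sum, hmeq,
    sum_mul_div_add_eq_sub hK hmk hmeq]
  ring

section PoissonSolution

variable [DecidableEq α]

/-- The solution, vanishing at the empty word, of the Poisson equation
`P f = f + 𝟙[last letter = i] - c` of a polymer chain. -/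
noncomputable def poissonSolution (km : α → ℝ) (K m c : ℝ) (i : α) (x : List α) : ℝ :=
  x.foldl (fun t j =>
    (c * km j - if j = i then km j + K else 0) / (m + km j) + km j / (m + km j) * t) 0

variable {km : α → ℝ} {K m c : ℝ} {i : α}

lemma poissonSolution_append_singleton (x : List α) (j : α) :
    poissonSolution km K m c i (x ++ [j])
      = (c * km j - if j = i then km j + K else 0) / (m + km j)
        + km j / (m + km j) * poissonSolution km K m c i x :=
  List.foldl_concat _ _ _ _

lemma exists_abs_poissonSolution_le [Fintype α] (hm : 0 < m) (hkm : ∀ j, 0 ≤ km j) :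
    ∃ C, ∀ x, |poissonSolution km K m c i x| ≤ C := by
  set κ := ∑ j, km j
  have hκ : 0 ≤ κ := sum_nonneg fun j _ => hkm j
  have hq : κ / (m + κ) < 1 := (div_lt_one (by linarith)).2 (by linarith)
  have hρ : ∀ j, |km j / (m + km j)| ≤ κ / (m + κ) := fun j => by
    have hj : km j ≤ κ := single_le_sum (fun j _ => hkm j) (mem_univ j)
    rw [abs_of_nonneg (div_nonneg (hkm j) (by linarith [hkm j])),
      div_le_div_iff₀ (by linarith [hkm j]) (by linarith)]
    nlinarith
  refine ⟨_, fun x => abs_foldl_affine_le (fun j => single_le_sum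
    (f := fun j => |(c * km j - if j = i then km j + K else 0) / (m + km j)|)
    (fun j _ => abs_nonneg _) (mem_univ j)) hρ hq x ?_⟩
  rw [abs_zero]
  exact div_nonneg (sum_nonneg fun j _ => abs_nonneg _) (sub_nonneg.2 hq.le)

end PoissonSolution

lemma IsPolymerChain.tsum_mul_poissonSolution [Fintype α] [DecidableEq α] {kp km : α → ℝ}
    {K m c : ℝ} {p : List α → List α → ℝ} (hp : IsPolymerChain kp km K p)
    (hK : K = ∑ r, kp r) (hK0 : 0 < K) (hm : 0 < m) (hkm : ∀ j, 0 ≤ km j)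
    (hmeq : ∑ r, kp r / (m + km r) = 1) (i : α)
    (hc : c * (2 * K - m) = kp i * (km i + K) / (m + km i)) (z : List α) :
    ∑' y, p z y * poissonSolution km K m c i y
      = poissonSolution km K m c i z + (Set.range (· ++ [i])).indicator 1 z - c := by
  set f := poissonSolution km K m c i
  have hmk : ∀ j, m + km j ≠ 0 := fun j => by linarith [hkm j]
  have hKj : ∀ j, km j + K ≠ 0 := fun j => by linarith [hkm j]
  have hρ := sum_mul_div_add_eq_sub hK hmk hmeq
  have hφ : ∑ r, kp r * ((c * km r - if r = i then km r + K else 0) / (m + km r)) = -(c * K) := by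
    have h : ∀ r, kp r * ((c * km r - if r = i then km r + K else 0) / (m + km r))
        = c * (kp r * km r / (m + km r)) - if r = i then kp r * (km r + K) / (m + km r) else 0 :=
      fun r => by split_ifs <;> field_simp [hmk r]; ring
    rw [sum_congr rfl fun r _ => h r, sum_sub_distrib, ← mul_sum, hρ, sum_ite_eq' univ i,
      if_pos (mem_univ i), ← hc]
    ring
  have hchildren : ∀ x, ∑ r, kp r * f (x ++ [r]) = (K - m) * f x - c * K := fun x => by
    have hlin : ∑ r, kp r * (km r / (m + km r) * f x) = (K - m) * f x := by
      rw [← hρ, sum_mul]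
      exact sum_congr rfl fun r _ => by ring
    simp only [f, poissonSolution_append_singleton, mul_add, sum_add_distrib, hφ, hlin]
    ring
  have hnil : f [] = 0 := rfl
  rcases z.eq_nil_or_concat' with rfl | ⟨x, j, rfl⟩
  · have hroot := hchildren []
    simp only [List.nil_append, hnil, mul_zero, zero_sub] at hroot
    rw [hp.tsum_nil_mul, Set.indicator_of_notMem (by simp), hnil]
    simp only [div_mul_eq_mul_div, ← sum_div, hroot]
    field_simp
    ring
  · have hcone : (Set.range (· ++ [i])).indicator (1 : List α → ℝ) (x ++ [j])
        = if j = i then 1 else 0 := by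
      split_ifs with h
      · exact Set.indicator_of_mem (Set.mem_range.2 ⟨x, by rw [h]⟩) _
      · exact Set.indicator_of_notMem (by simpa [eq_comm] using h) _
    have hsum : ∑ r, kp r / (km j + K) * f (x ++ [j] ++ [r])
        = ((K - m) * f (x ++ [j]) - c * K) / (km j + K) := by
      simp only [div_mul_eq_mul_div, ← sum_div, hchildren]
    rw [hp.tsum_append_singleton_mul, hsum, hcone,
      show f (x ++ [j]) = _ from poissonSolution_append_singleton x j]
    split_ifs <;> field_simp [hmk j, hKj j] <;> ring

theorem stmt12_general (d : ℕ) (kp km : Fin d → ℝ)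
    (hkp : ∀ i, 0 < kp i) (hkm : ∀ i, 0 < km i)
    (K : ℝ) (hK : K = ∑ i : Fin d, kp i)
    (m : ℝ) (hm : 0 < m) (hmeq : ∑ r : Fin d, kp r / (m + km r) = 1)
    (σ : Fin d → ℝ) (hσ : ∀ i, σ i = kp i / (m + km i))
    (p : List (Fin d) → List (Fin d) → ℝ)
    (hp_root : ∀ i : Fin d, p [] [i] = kp i / K)
    (hp_up : ∀ (x : List (Fin d)) (i j : Fin d),
      p (x ++ [i]) (x ++ [i] ++ [j]) = kp j / (km i + K))
    (hp_down : ∀ (x : List (Fin d)) (i : Fin d), p (x ++ [i]) x = km i / (km i + K))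
    (hp_zero : ∀ x y : List (Fin d),
      (¬ ∃ i : Fin d, y = x ++ [i]) → (¬ ∃ i : Fin d, x = y ++ [i]) → p x y = 0)
    (pn : ℕ → List (Fin d) → List (Fin d) → ℝ)
    (hpn0 : ∀ x y : List (Fin d), pn 0 x y = if x = y then 1 else 0)
    (hpns : ∀ (n : ℕ) (x y : List (Fin d)),
      pn (n + 1) x y = ∑' z : List (Fin d), pn n x z * p z y) :
    ∀ i : Fin d,
      Tendsto
        (fun n : ℕ =>
          (∑ ℓ ∈ Finset.range (n + 1), ∑' x : List (Fin d), pn ℓ [] (x ++ [i])) / (n : ℝ))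
        atTop
        (nhds (σ i * (km i + K) / ∑ j : Fin d, σ j * (km j + K))) := by
  intro i
  obtain rfl := eq_transitionPow hpn0 hpns
  have hp : IsPolymerChain kp km K p := ⟨hp_root, hp_up, hp_down, hp_zero⟩
  have : Nonempty (Fin d) :=
    univ_nonempty_iff.mp (nonempty_of_sum_ne_zero (hmeq ▸ one_ne_zero))
  have hK0 : 0 < K := hK ▸ sum_pos (fun j _ => hkp j) univ_nonempty
  have hkm0 : ∀ j, 0 ≤ km j := fun j => (hkm j).le
  have hS : ∑ j, σ j * (km j + K) = 2 * K - m := by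
    simp only [hσ]
    exact sum_div_add_mul_add_eq_two_mul_sub hK (fun j => by linarith [hkm j]) hmeq
  have hS0 : 0 < ∑ j, σ j * (km j + K) :=
    sum_pos (fun j _ => by rw [hσ]; have := hkp j; have := hkm j; positivity) univ_nonempty
  set c := σ i * (km i + K) / ∑ j, σ j * (km j + K)
  have hc : c * (2 * K - m) = kp i * (km i + K) / (m + km i) := by
    rw [← hS, div_mul_cancel₀ _ hS0.ne', hσ]
    ring
  obtain ⟨C, hC⟩ := exists_abs_poissonSolution_le (K := K) (c := c) (i := i) hm hkm0
  have := tendsto_cesaro_of_poisson hp.length_le (hp.nonneg (fun j => (hkp j).le) hkm0 hK0.le)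
    (hp.tsum_eq_one hK hK0 hkm0) (hp.tsum_mul_poissonSolution hK hK0 hm hkm0 hmeq i hc) hC
  simpa only [tsum_mul_indicator_range_append_singleton] using this

/-- Cesàro limit of expected cone-type visit counts: assume
`α = Σ i, k⁺ i / k⁻ i > 1`, let `m` be the unique positive real with
`Σ r, k⁺ r / (m + k⁻ r) = 1`, and set `σ̄ i = k⁺ i / (m + k⁻ i)`.  For `i : Fin d` and
`n : ℕ` let `Eᵢ(n) = Σ_{ℓ=0}^{n} Σ_{x} pˡ(o, x·i)` (the expected number of visits during
the first `n+1` steps to states whose last letter is `i`).  Then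
`Eᵢ(n)/n → σ̄ i (k⁻ i + K) / Σ j, σ̄ j (k⁻ j + K)` as `n → ∞`. -/
theorem stmt12 (d : ℕ) (hd : 1 ≤ d) (kp km : Fin d → ℝ)
    (hkp : ∀ i, 0 < kp i) (hkm : ∀ i, 0 < km i)
    (K : ℝ) (hK : K = ∑ i : Fin d, kp i)
    (hα : 1 < ∑ i : Fin d, kp i / km i)
    (m : ℝ) (hm : 0 < m) (hmeq : ∑ r : Fin d, kp r / (m + km r) = 1)
    (σ : Fin d → ℝ) (hσ : ∀ i, σ i = kp i / (m + km i))
    (p : List (Fin d) → List (Fin d) → ℝ)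
    (hp_root : ∀ i : Fin d, p [] [i] = kp i / K)
    (hp_up : ∀ (x : List (Fin d)) (i j : Fin d),
      p (x ++ [i]) (x ++ [i] ++ [j]) = kp j / (km i + K))
    (hp_down : ∀ (x : List (Fin d)) (i : Fin d), p (x ++ [i]) x = km i / (km i + K))
    (hp_zero : ∀ x y : List (Fin d),
      (¬ ∃ i : Fin d, y = x ++ [i]) → (¬ ∃ i : Fin d, x = y ++ [i]) → p x y = 0)
    (pn : ℕ → List (Fin d) → List (Fin d) → ℝ)
    (hpn0 : ∀ x y : List (Fin d), pn 0 x y = if x = y then 1 else 0)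
    (hpns : ∀ (n : ℕ) (x y : List (Fin d)),
      pn (n + 1) x y = ∑' z : List (Fin d), pn n x z * p z y) :
    ∀ i : Fin d,
      Tendsto
        (fun n : ℕ =>
          (∑ ℓ ∈ Finset.range (n + 1), ∑' x : List (Fin d), pn ℓ [] (x ++ [i])) / (n : ℝ))
        atTop
        (nhds (σ i * (km i + K) / ∑ j : Fin d, σ j * (km j + K))) :=
  stmt12_general d kp km hkp hkm K hK m hm hmeq σ hσ p hp_root hp_up hp_down hp_zero pn hpn0 hpns
end

section
/- Cone-type invariance of first-passage probabilities: for every x ∈ 𝒯 and every i ∈ Fin d, F(x·i, x) = F([i], o), i.e., the probability that the embedded chain started at a polymer ending in monomer i ever reaches its predecessor depends only on the terminal monomer type i. -/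
/-!
Away from the root the transition probabilities only see the last letter, so `p` is invariant
under prefixing: `p (x ++ u) (x ++ v) = p u v` for `u ≠ []`. Moreover a nearest-neighbour step
from `x ++ u` with `u ≠ []` never leaves the cone `x ++ _`, so a path from `x ++ u` that avoids
`x` before its last step is the translate by `x` of a path from `u` avoiding `[]`. Induction on
the first-passage recursion turns this into `fⁿ(x ++ u, x) = fⁿ(u, [])` for every `n ≥ 1`.
-/

namespace NearestNeighbourWalk

variable {α : Type*} {p : List α → List α → ℝ}

theorem prefix_of_apply_append_ne_zero
    (hzero : ∀ x y, (¬∃ i, y = x ++ [i]) → (¬∃ i, x = y ++ [i]) → p x y = 0)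
    {x u z : List α} (hu : u ≠ []) (h : p (x ++ u) z ≠ 0) : x <+: z := by
  by_contra hxz
  refine h (hzero _ _ ?_ ?_)
  · rintro ⟨i, rfl⟩
    exact hxz ⟨u ++ [i], by simp⟩
  · rintro ⟨i, hi⟩
    have hlen : x.length ≤ z.length := by
      have hlen := congrArg List.length hi
      have := List.length_pos_iff.mpr hu
      simp only [List.length_append, List.length_singleton] at hlen
      omega
    exact hxz (List.prefix_of_prefix_length_le ⟨u, rfl⟩ ⟨[i], hi.symm⟩ hlen)

theorem apply_append_append
    (hup : ∀ x i j, p (x ++ [i]) (x ++ [i] ++ [j]) = p [i] [i, j])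
    (hdown : ∀ x i, p (x ++ [i]) x = p [i] [])
    (hzero : ∀ x y, (¬∃ i, y = x ++ [i]) → (¬∃ i, x = y ++ [i]) → p x y = 0)
    (x : List α) {u : List α} (v : List α) (hu : u ≠ []) :
    p (x ++ u) (x ++ v) = p u v := by
  by_cases hchild : ∃ j, v = u ++ [j]
  · obtain ⟨j, rfl⟩ := hchild
    obtain ⟨u, i, rfl⟩ := (List.eq_nil_or_concat' u).resolve_left hu
    simpa only [List.append_assoc] using (hup (x ++ u) i j).trans (hup u i j).symm
  by_cases hparent : ∃ i, u = v ++ [i]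
  · obtain ⟨i, rfl⟩ := hparent
    simpa only [List.append_assoc] using (hdown (x ++ v) i).trans (hdown v i).symm
  rw [hzero u v hchild hparent, hzero]
  all_goals simpa only [List.append_assoc, List.append_cancel_left_eq]

theorem firstPassage_append_eq [DecidableEq α]
    (hinv : ∀ x u v, u ≠ [] → p (x ++ u) (x ++ v) = p u v)
    (hcone : ∀ x u z, u ≠ [] → p (x ++ u) z ≠ 0 → x <+: z)
    {f : ℕ → List α → List α → ℝ} (hf1 : ∀ x y, f 1 x y = p x y)
    (hfs : ∀ n, 1 ≤ n → ∀ x y, f (n + 1) x y = ∑' z, if z = y then 0 else p x z * f n z y)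
    {n : ℕ} (hn : 1 ≤ n) (x : List α) {u : List α} (hu : u ≠ []) :
    f n (x ++ u) x = f n u [] := by
  induction n, hn using Nat.le_induction generalizing u with
  | base => simpa only [hf1, List.append_nil] using hinv x u [] hu
  | succ n hn ih =>
    rw [hfs n hn, hfs n hn]
    have hsupport : Function.support
        (fun z => if z = x then 0 else p (x ++ u) z * f n z x) ⊆ Set.range (x ++ ·) := by
      intro z hz
      by_cases hzx : z = x
      · simp [hzx] at hz
      · exact hcone x u z hu (left_ne_zero_of_mul (by simpa [hzx] using hz))
    rw [← (List.append_right_injective x).tsum_eq hsupport]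
    refine tsum_congr fun v => ?_
    rcases eq_or_ne v [] with rfl | hv
    · simp
    · simp only [List.append_right_eq_self, hv, if_false, hinv x u v hu, ih hv]

end NearestNeighbourWalk

open NearestNeighbourWalk in
theorem stmt13_general (d : ℕ) (kp km : Fin d → ℝ)
    (K : ℝ)
    (p : List (Fin d) → List (Fin d) → ℝ)
    (hp_up : ∀ (x : List (Fin d)) (i j : Fin d),
      p (x ++ [i]) (x ++ [i] ++ [j]) = kp j / (km i + K))
    (hp_down : ∀ (x : List (Fin d)) (i : Fin d), p (x ++ [i]) x = km i / (km i + K))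
    (hp_zero : ∀ x y : List (Fin d),
      (¬ ∃ i : Fin d, y = x ++ [i]) → (¬ ∃ i : Fin d, x = y ++ [i]) → p x y = 0)
    (f : ℕ → List (Fin d) → List (Fin d) → ℝ)
    (hf1 : ∀ x y : List (Fin d), f 1 x y = p x y)
    (hfs : ∀ n : ℕ, 1 ≤ n → ∀ x y : List (Fin d),
      f (n + 1) x y = ∑' z : List (Fin d), if z = y then 0 else p x z * f n z y) :
    ∀ (x : List (Fin d)) (i : Fin d),
      (∑' n : ℕ, f (n + 1) (x ++ [i]) x) = ∑' n : ℕ, f (n + 1) [i] [] := by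
  have hinv : ∀ x u v, u ≠ [] → p (x ++ u) (x ++ v) = p u v :=
    fun x u v hu => apply_append_append
      (fun x i j => (hp_up x i j).trans (hp_up [] i j).symm)
      (fun x i => (hp_down x i).trans (hp_down [] i).symm) hp_zero x v hu
  have hcone : ∀ x u z, u ≠ [] → p (x ++ u) z ≠ 0 → x <+: z :=
    fun _ _ _ hu h => prefix_of_apply_append_ne_zero hp_zero hu h
  intro x i
  exact tsum_congr fun n =>
    firstPassage_append_eq hinv hcone hf1 hfs (Nat.le_add_left 1 n) x (List.cons_ne_nil i [])

/-- Cone-type invariance of first-passage probabilities: for every state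
`x` and every monomer type `i`, `F(x·i, x) = F([i], o)`, where
`F(x,y) = Σ_{n≥1} fⁿ(x,y)` with `f¹ = p` and `fⁿ⁺¹(x,y) = Σ_{z≠y} p(x,z)·fⁿ(z,y)`:
the probability that the embedded chain started at a polymer ending in monomer `i` ever
reaches its predecessor depends only on the terminal monomer type `i`. -/
theorem stmt13 (d : ℕ) (hd : 1 ≤ d) (kp km : Fin d → ℝ)
    (hkp : ∀ i, 0 < kp i) (hkm : ∀ i, 0 < km i)
    (K : ℝ) (hK : K = ∑ i : Fin d, kp i)
    (p : List (Fin d) → List (Fin d) → ℝ)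
    (hp_root : ∀ i : Fin d, p [] [i] = kp i / K)
    (hp_up : ∀ (x : List (Fin d)) (i j : Fin d),
      p (x ++ [i]) (x ++ [i] ++ [j]) = kp j / (km i + K))
    (hp_down : ∀ (x : List (Fin d)) (i : Fin d), p (x ++ [i]) x = km i / (km i + K))
    (hp_zero : ∀ x y : List (Fin d),
      (¬ ∃ i : Fin d, y = x ++ [i]) → (¬ ∃ i : Fin d, x = y ++ [i]) → p x y = 0)
    (f : ℕ → List (Fin d) → List (Fin d) → ℝ)
    (hf1 : ∀ x y : List (Fin d), f 1 x y = p x y)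
    (hfs : ∀ n : ℕ, 1 ≤ n → ∀ x y : List (Fin d),
      f (n + 1) x y = ∑' z : List (Fin d), if z = y then 0 else p x z * f n z y) :
    ∀ (x : List (Fin d)) (i : Fin d),
      (∑' n : ℕ, f (n + 1) (x ++ [i]) x) = ∑' n : ℕ, f (n + 1) [i] [] :=
  stmt13_general d kp km K p hp_up hp_down hp_zero f hf1 hfs
end

section
/- Explicit value of the first-passage probabilities in the transient regime: assume α > 1 and let m be the unique positive real with Σᵣ k⁺(r)/(m + k⁻(r)) = 1. Then for every i ∈ Fin d, the first-passage probability satisfies F([i], o) = k⁻(i)/(m + k⁻(i)); in particular 0 < F([i], o) < 1. -/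
/-!
A first passage from `[i]` to the root either steps down at once, or steps up to some `[i, j]`,
from where it must first return to `[i]` (a translated copy of the first passage from `[j]` to
the root) and then pass from `[i]` to the root. So the generating functions
`Gᵢ(s) = Σₙ fⁿ⁺¹([i], o) sⁿ` satisfy `Gᵢ = cᵢ + s² Gᵢ Σⱼ wᵢⱼ Gⱼ`, and the partial sums of
`Fᵢ = Gᵢ(1)` are bounded by every nonnegative `q` with `cᵢ + qᵢ Σⱼ wᵢⱼ qⱼ ≤ qᵢ`, where
`cᵢ = k⁻ᵢ / (k⁻ᵢ + K)` and `wᵢⱼ = k⁺ⱼ / (k⁻ᵢ + K)`.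
The vector `qᵢ = k⁻ᵢ / (m + k⁻ᵢ)` is such a fixed point, so `F ≤ q` and `F` is a fixed point too.
Every fixed point has the form `k⁻ᵢ / (μ + k⁻ᵢ)` with `μ = K - Σⱼ k⁺ⱼ Fⱼ` and
`Σᵣ k⁺ᵣ / (μ + k⁻ᵣ) = 1`; `F ≤ q` gives `μ ≥ m`, and strict monotonicity gives `μ = m`.
-/

open Finset Function

theorem sum_range_cauchy_product_le {x y : ℕ → ℝ} (hx : ∀ k, 0 ≤ x k) (hy : ∀ k, 0 ≤ y k)
    (N : ℕ) :
    ∑ n ∈ range N, ∑ k ∈ range (n + 1), x k * y (n - k) ≤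
      (∑ k ∈ range N, x k) * ∑ k ∈ range N, y k := by
  rw [sum_range_diag_flip N fun k l => x k * y l, sum_mul_sum]
  exact sum_le_sum fun k _ => sum_le_sum_of_subset_of_nonneg (range_subset_range.2 (N.sub_le k))
    fun l _ _ => mul_nonneg (hx k) (hy l)

section QuadraticRecursion

variable {ι : Type*} [Fintype ι] {c : ι → ℝ} {w : ι → ι → ℝ}

def quadraticMap (c : ι → ℝ) (w : ι → ι → ℝ) (F : ι → ℝ) (i : ι) : ℝ :=
  c i + ∑ j, w i j * (F j * F i)

/-- The coefficientwise form of `Gᵢ(s) = cᵢ + s² Gᵢ(s) Σⱼ wᵢⱼ Gⱼ(s)` for `Gᵢ(s) = Σₙ A n i sⁿ`. -/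
structure IsQuadraticRecursion (c : ι → ℝ) (w : ι → ι → ℝ) (A : ℕ → ι → ℝ) : Prop where
  zero : ∀ i, A 0 i = c i
  one : ∀ i, A 1 i = 0
  add_two : ∀ n i, A (n + 2) i = ∑ j, w i j * ∑ k ∈ range (n + 1), A k j * A (n - k) i

namespace IsQuadraticRecursion

variable {A : ℕ → ι → ℝ}

theorem nonneg (hA : IsQuadraticRecursion c w A) (hc : ∀ i, 0 ≤ c i)
    (hw : ∀ i j, 0 ≤ w i j) (n : ℕ) : ∀ i, 0 ≤ A n i := by
  induction n using Nat.strong_induction_on with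
  | _ n ih =>
    intro i
    match n with
    | 0 => exact (hA.zero i).symm ▸ hc i
    | 1 => exact (hA.one i).ge
    | n + 2 =>
      rw [hA.add_two]
      refine sum_nonneg fun j _ => mul_nonneg (hw i j) (sum_nonneg fun k hk => ?_)
      have hk := mem_range.1 hk
      exact mul_nonneg (ih k (by omega) j) (ih (n - k) (by omega) i)

theorem sum_range_le (hA : IsQuadraticRecursion c w A) (hc : ∀ i, 0 ≤ c i)
    (hw : ∀ i j, 0 ≤ w i j) {q : ι → ℝ} (hq₀ : 0 ≤ q) (hq : quadraticMap c w q ≤ q) (N : ℕ) :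
    ∀ i, ∑ n ∈ range N, A n i ≤ q i := by
  have hA₀ := hA.nonneg hc hw
  induction N with
  | zero => exact fun i => by simpa using hq₀ i
  | succ N ih =>
    intro i
    calc ∑ n ∈ range (N + 1), A n i
        ≤ ∑ n ∈ range (N + 2), A n i :=
          sum_le_sum_of_subset_of_nonneg (range_subset_range.2 (by omega)) fun n _ _ => hA₀ n i
      _ = c i + ∑ j, w i j * ∑ n ∈ range N, ∑ k ∈ range (n + 1), A k j * A (n - k) i := by
          rw [sum_range_succ', sum_range_succ', hA.zero, hA.one, add_zero, add_comm]
          simp only [hA.add_two, mul_sum]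
          rw [sum_comm]
      _ ≤ c i + ∑ j, w i j * (q j * q i) := by
          gcongr with j
          · exact hw i j
          · exact (sum_range_cauchy_product_le (hA₀ · j) (hA₀ · i) N).trans
              (mul_le_mul (ih j) (ih i) (sum_nonneg fun n _ => hA₀ n i) (hq₀ j))
      _ ≤ q i := hq i

theorem isFixedPt_tsum (hA : IsQuadraticRecursion c w A) (hc : ∀ i, 0 ≤ c i)
    (hw : ∀ i j, 0 ≤ w i j) (hs : ∀ i, Summable (A · i)) :
    IsFixedPt (quadraticMap c w) fun i => ∑' n, A n i := by
  funext i
  have hnorm (j : ι) : Summable fun n => ‖A n j‖ :=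
    (hs j).congr fun n => (Real.norm_of_nonneg (hA.nonneg hc hw n j)).symm
  have hcauchy (j : ι) :=
    (summable_norm_sum_mul_range_of_summable_norm (hnorm j) (hnorm i)).of_norm
  symm
  conv_lhs => rw [← (hs i).sum_add_tsum_nat_add 2, sum_range_succ, sum_range_one, hA.zero,
    hA.one, add_zero]
  simp only [hA.add_two]
  rw [Summable.tsum_finsetSum fun j _ => (hcauchy j).mul_left (w i j)]
  simp only [quadraticMap, tsum_mul_left,
    tsum_mul_tsum_eq_tsum_sum_range_of_summable_norm (hnorm _) (hnorm i)]

end IsQuadraticRecursion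

end QuadraticRecursion

section Rates

variable {ι : Type*} [Fintype ι] {kp km : ι → ℝ} {K m : ℝ}

theorem sum_mul_div_add_eq (kp : ι → ℝ) {x : ℝ} (hx : ∀ j, x + km j ≠ 0) :
    ∑ j, kp j * (km j / (x + km j)) = ∑ j, kp j - x * ∑ j, kp j / (x + km j) := by
  rw [mul_sum, ← sum_sub_distrib]
  refine sum_congr rfl fun j _ => ?_
  field_simp [hx j]
  ring

theorem isFixedPt_quadraticMap_div_add (hkp : ∀ i, 0 < kp i) (hkm : ∀ i, 0 < km i)
    (hK : K = ∑ i, kp i) (hm : 0 < m) (hmeq : ∑ r, kp r / (m + km r) = 1) :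
    IsFixedPt (quadraticMap (fun i => km i / (km i + K)) fun i j => kp j / (km i + K))
      fun i => km i / (m + km i) := by
  funext i
  have hK₀ : 0 ≤ K := hK ▸ sum_nonneg fun i _ => (hkp i).le
  have hsum := sum_mul_div_add_eq kp fun j => (add_pos hm (hkm j)).ne'
  rw [hmeq, mul_one, ← hK] at hsum
  have hi : km i + K ≠ 0 := by linarith [hkm i]
  have hi' : m + km i ≠ 0 := by linarith [hkm i]
  calc km i / (km i + K) + ∑ j, kp j / (km i + K) * (km j / (m + km j) * (km i / (m + km i)))
      = km i / (km i + K) +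
          (∑ j, kp j * (km j / (m + km j))) * (km i / (m + km i)) / (km i + K) := by
        rw [sum_mul, sum_div]
        congr 1
        exact sum_congr rfl fun j _ => by ring
    _ = km i / (m + km i) := by
        rw [hsum]
        field_simp
        ring

theorem eq_div_add_of_isFixedPt_of_le (hkp : ∀ i, 0 < kp i) (hkm : ∀ i, 0 < km i)
    (hK : K = ∑ i, kp i) (hm : 0 < m) (hmeq : ∑ r, kp r / (m + km r) = 1) {F : ι → ℝ}
    (hF : IsFixedPt (quadraticMap (fun i => km i / (km i + K)) fun i j => kp j / (km i + K)) F)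
    (hle : ∀ i, F i ≤ km i / (m + km i)) (i : ι) :
    F i = km i / (m + km i) := by
  have hK₀ : 0 ≤ K := hK ▸ sum_nonneg fun i _ => (hkp i).le
  set μ := K - ∑ j, kp j * F j with hμ
  have hmμ : m ≤ μ := by
    have hle' := sum_le_sum fun j (_ : j ∈ univ) => mul_le_mul_of_nonneg_left (hle j) (hkp j).le
    rw [sum_mul_div_add_eq kp fun j => (add_pos hm (hkm j)).ne', hmeq, ← hK] at hle'
    linarith
  have hμ_pos (j : ι) : 0 < μ + km j := by linarith [hkm j]
  have hFμ (i : ι) : F i = km i / (μ + km i) := by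
    have hi : km i + K ≠ 0 := by linarith [hkm i]
    have hsum : ∑ j, kp j / (km i + K) * (F j * F i) =
        (∑ j, kp j * F j) * F i / (km i + K) := by
      rw [sum_mul, sum_div]
      exact sum_congr rfl fun j _ => by ring
    have h := (congrFun hF i).symm
    rw [quadraticMap, hsum] at h
    field_simp at h
    rw [eq_div_iff (hμ_pos i).ne', hμ]
    linear_combination h
  have hμeq : ∑ r, kp r / (μ + km r) = 1 := by
    have h := sum_mul_div_add_eq kp fun j => (hμ_pos j).ne'
    simp only [← hFμ] at h
    rw [← hK] at h
    have : μ * (∑ r, kp r / (μ + km r) - 1) = 0 := by linarith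
    linarith [(mul_eq_zero.1 this).resolve_left (by linarith)]
  have hμm : μ = m := by
    by_contra hne
    have hlt : m < μ := lt_of_le_of_ne hmμ (Ne.symm hne)
    have hι : (univ : Finset ι).Nonempty := nonempty_of_sum_ne_zero (hmeq ▸ one_ne_zero)
    have : ∑ r, kp r / (μ + km r) < ∑ r, kp r / (m + km r) := sum_lt_sum_of_nonempty hι
      fun j _ => div_lt_div_of_pos_left (hkp j) (add_pos hm (hkm j)) (by linarith)
    linarith
  rw [hFμ i, hμm]

theorem IsQuadraticRecursion.tsum_eq_div_add (hkp : ∀ i, 0 < kp i) (hkm : ∀ i, 0 < km i)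
    (hK : K = ∑ i, kp i) (hm : 0 < m) (hmeq : ∑ r, kp r / (m + km r) = 1) {A : ℕ → ι → ℝ}
    (hA : IsQuadraticRecursion (fun i => km i / (km i + K)) (fun i j => kp j / (km i + K)) A)
    (i : ι) : ∑' n, A n i = km i / (m + km i) := by
  have hK₀ : 0 ≤ K := hK ▸ sum_nonneg fun i _ => (hkp i).le
  have hc (i : ι) : 0 ≤ km i / (km i + K) := div_nonneg (hkm i).le (by linarith [hkm i])
  have hw (i j : ι) : 0 ≤ kp j / (km i + K) := div_nonneg (hkp j).le (by linarith [hkm i])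
  have hq₀ (i : ι) : 0 ≤ km i / (m + km i) := div_nonneg (hkm i).le (by linarith [hkm i])
  have hbound := hA.sum_range_le hc hw hq₀
    (isFixedPt_quadraticMap_div_add hkp hkm hK hm hmeq).le
  have hA₀ := hA.nonneg hc hw
  exact eq_div_add_of_isFixedPt_of_le hkp hkm hK hm hmeq
    (hA.isFixedPt_tsum hc hw fun i => summable_of_sum_range_le (hA₀ · i) (hbound · i))
    (fun i => Real.tsum_le_of_sum_range_le (hA₀ · i) (hbound · i)) i

end Rates

section TreeWalk

variable {α : Type*}

structure IsTreeWalk (u : α → α → ℝ) (v : α → ℝ) (p : List α → List α → ℝ) : Prop where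
  up : ∀ x i j, p (x ++ [i]) (x ++ [i] ++ [j]) = u i j
  down : ∀ x i, p (x ++ [i]) x = v i
  eq_zero : ∀ x y, (¬ ∃ i, y = x ++ [i]) → (¬ ∃ i, x = y ++ [i]) → p x y = 0

structure IsFirstPassage [DecidableEq α] (p : List α → List α → ℝ)
    (f : ℕ → List α → List α → ℝ) : Prop where
  one : ∀ x y, f 1 x y = p x y
  succ : ∀ n, 1 ≤ n → ∀ x y, f (n + 1) x y = ∑' z, if z = y then 0 else p x z * f n z y

variable {u : α → α → ℝ} {v : α → ℝ} {p : List α → List α → ℝ}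

theorem IsTreeWalk.apply_append_append_singleton_eq_zero (hp : IsTreeWalk u v p) {w : List α}
    (hw : w ≠ []) (x : List α) (l : α) : p (x ++ w ++ [l]) x = 0 := by
  apply hp.eq_zero
  · rintro ⟨j, hj⟩
    simpa using congrArg List.length hj
  · rintro ⟨j, hj⟩
    rw [List.append_assoc, List.append_cancel_left_eq] at hj
    simpa [hw] using congrArg List.length hj

namespace IsFirstPassage

variable [DecidableEq α] [Fintype α] {f : ℕ → List α → List α → ℝ}

theorem succ_append_singleton (hp : IsTreeWalk u v p) (hf : IsFirstPassage p f)
    {n : ℕ} (hn : 1 ≤ n) {x y : List α} (hy : y.length ≤ x.length) (i : α) :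
    f (n + 1) (x ++ [i]) y =
      ∑ j, u i j * f n (x ++ [i] ++ [j]) y + if x = y then 0 else v i * f n x y := by
  have hchild (j : α) : x ++ [i] ++ [j] ≠ y := fun h => by
    simpa using (congrArg List.length h).trans_le hy
  have hparent : x ∉ univ.image fun j => x ++ [i] ++ [j] := by
    simp only [mem_image, mem_univ, true_and, not_exists]
    exact fun j h => by simpa using congrArg List.length h
  rw [hf.succ n hn, tsum_eq_sum (s := insert x (univ.image fun j => x ++ [i] ++ [j])),
    sum_insert hparent, sum_image fun j _ k _ h => by simpa using h, add_comm]
  · congr 1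
    · exact sum_congr rfl fun j _ => by rw [if_neg (hchild j), hp.up]
    · rw [hp.down]
  · intro z hz
    simp only [mem_insert, mem_image, mem_univ, true_and, not_or, not_exists] at hz
    rw [hp.eq_zero _ _ (fun ⟨j, hj⟩ => hz.2 j hj.symm)
      (fun ⟨j, hj⟩ => hz.1 (List.append_inj' hj rfl).1.symm), zero_mul, ite_self]

theorem apply_append_self (hp : IsTreeWalk u v p) (hf : IsFirstPassage p f) {n : ℕ}
    (hn : 1 ≤ n) :
    ∀ {w : List α}, w ≠ [] → ∀ x, f n (x ++ w) x = f n w [] := by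
  induction n, hn using Nat.le_induction with
  | base =>
    intro w hw x
    obtain ⟨w, l, rfl⟩ := (List.eq_nil_or_concat' w).resolve_left hw
    rw [hf.one, hf.one, ← List.append_assoc]
    by_cases hw : w = []
    · subst hw
      simpa using (hp.down x l).trans (hp.down [] l).symm
    · rw [hp.apply_append_append_singleton_eq_zero hw,
        ← hp.apply_append_append_singleton_eq_zero hw [] l, List.nil_append]
  | succ n hn ih =>
    intro w hw x
    obtain ⟨w, l, rfl⟩ := (List.eq_nil_or_concat' w).resolve_left hw
    rw [← List.append_assoc, succ_append_singleton hp hf hn (by simp),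
      succ_append_singleton hp hf hn (by simp)]
    congr 1
    · refine sum_congr rfl fun j _ => ?_
      rw [List.append_assoc x, List.append_assoc x, ih (by simp)]
    · by_cases hw : w = []
      · simp [hw]
      · rw [if_neg (by simpa using hw), if_neg hw, ih hw]

/-- Every path from `x ++ [i] ++ w` down to `x` passes through `x ++ [i]`; split it at the first
visit there. -/
theorem apply_append_singleton_append_self (hp : IsTreeWalk u v p) (hf : IsFirstPassage p f)
    (n : ℕ) : ∀ {w : List α}, w ≠ [] → ∀ x i,
      f (n + 1) (x ++ [i] ++ w) x =
        ∑ b ∈ range n, f (b + 1) (x ++ [i] ++ w) (x ++ [i]) * f (n - b) (x ++ [i]) x := by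
  induction n with
  | zero =>
    intro w hw x i
    obtain ⟨w, l, rfl⟩ := (List.eq_nil_or_concat' w).resolve_left hw
    rw [hf.one, ← List.append_assoc, List.append_assoc x,
      hp.apply_append_append_singleton_eq_zero (by simp), sum_range_zero]
  | succ n ih =>
    intro w hw x i
    obtain ⟨w, l, rfl⟩ := (List.eq_nil_or_concat' w).resolve_left hw
    have hlen : x.length ≤ (x ++ [i] ++ w).length := by simp
    have hlen' : (x ++ [i]).length ≤ (x ++ [i] ++ w).length := by simp
    rw [← List.append_assoc (x ++ [i]), succ_append_singleton hp hf (Nat.le_add_left 1 n) hlen,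
      if_neg (by simp), sum_range_succ']
    simp only [Nat.add_sub_add_right, Nat.sub_zero,
      succ_append_singleton hp hf (Nat.le_add_left 1 _) hlen', add_mul, sum_add_distrib]
    have hchildren : ∑ j, u l j * f (n + 1) (x ++ [i] ++ w ++ [l] ++ [j]) x =
        ∑ b ∈ range n, (∑ j, u l j * f (b + 1) (x ++ [i] ++ w ++ [l] ++ [j]) (x ++ [i])) *
          f (n - b) (x ++ [i]) x := by
      simp only [sum_mul, mul_assoc]
      rw [sum_comm]
      refine sum_congr rfl fun j _ => ?_
      rw [← mul_sum, show x ++ [i] ++ w ++ [l] ++ [j] = x ++ [i] ++ (w ++ [l] ++ [j]) by simp,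
        ih (by simp)]
    rw [hchildren, add_assoc, hf.one]
    congr 1
    by_cases hw : w = []
    · subst hw
      simp only [List.append_nil, hp.down, if_true, zero_mul, sum_const_zero, zero_add]
    · have hparent : x ++ [i] ++ w ≠ x ++ [i] := by simpa using hw
      rw [ih hw, hp.apply_append_append_singleton_eq_zero hw]
      simp only [hparent, if_false, zero_mul, add_zero, mul_sum, mul_assoc]

theorem apply_singleton_nil_add_two (hp : IsTreeWalk u v p) (hf : IsFirstPassage p f) (n : ℕ)
    (i : α) :
    f (n + 2) [i] [] = ∑ j, u i j * ∑ b ∈ range n, f (b + 1) [j] [] * f (n - b) [i] [] := by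
  have h := succ_append_singleton hp hf (Nat.le_add_left 1 n) (x := []) (y := []) le_rfl i
  simp only [List.nil_append, if_true, add_zero] at h
  rw [h]
  refine sum_congr rfl fun j _ => ?_
  have hsplit := apply_append_singleton_append_self hp hf n (List.cons_ne_nil j []) [] i
  simp only [List.nil_append] at hsplit
  simp only [hsplit, apply_append_self hp hf (Nat.le_add_left 1 _) (List.cons_ne_nil j []) [i]]

theorem isQuadraticRecursion (hp : IsTreeWalk u v p) (hf : IsFirstPassage p f) :
    IsQuadraticRecursion v u fun n i => f (n + 1) [i] [] where
  zero i := by simpa using (hf.one [i] []).trans (hp.down [] i)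
  one i := by simpa using hf.apply_singleton_nil_add_two hp 0 i
  add_two n i := by
    refine (hf.apply_singleton_nil_add_two hp (n + 1) i).trans
      (sum_congr rfl fun j _ => congrArg _ (sum_congr rfl fun k hk => ?_))
    rw [Nat.sub_add_comm (Nat.lt_succ_iff.1 (mem_range.1 hk))]

end IsFirstPassage

end TreeWalk

theorem stmt15_general (d : ℕ) (kp km : Fin d → ℝ)
    (hkp : ∀ i, 0 < kp i) (hkm : ∀ i, 0 < km i)
    (K : ℝ) (hK : K = ∑ i : Fin d, kp i)
    (m : ℝ) (hm : 0 < m) (hmeq : ∑ r : Fin d, kp r / (m + km r) = 1)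
    (p : List (Fin d) → List (Fin d) → ℝ)
    (hp_up : ∀ (x : List (Fin d)) (i j : Fin d),
      p (x ++ [i]) (x ++ [i] ++ [j]) = kp j / (km i + K))
    (hp_down : ∀ (x : List (Fin d)) (i : Fin d), p (x ++ [i]) x = km i / (km i + K))
    (hp_zero : ∀ x y : List (Fin d),
      (¬ ∃ i : Fin d, y = x ++ [i]) → (¬ ∃ i : Fin d, x = y ++ [i]) → p x y = 0)
    (f : ℕ → List (Fin d) → List (Fin d) → ℝ)
    (hf1 : ∀ x y : List (Fin d), f 1 x y = p x y)
    (hfs : ∀ n : ℕ, 1 ≤ n → ∀ x y : List (Fin d),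
      f (n + 1) x y = ∑' z : List (Fin d), if z = y then 0 else p x z * f n z y) :
    ∀ i : Fin d,
      (∑' n : ℕ, f (n + 1) [i] []) = km i / (m + km i) ∧
      0 < (∑' n : ℕ, f (n + 1) [i] []) ∧
      (∑' n : ℕ, f (n + 1) [i] []) < 1 := by
  intro i
  have hA := IsFirstPassage.isQuadraticRecursion (u := fun i j => kp j / (km i + K))
    (v := fun i => km i / (km i + K)) ⟨hp_up, hp_down, hp_zero⟩ ⟨hf1, hfs⟩
  have hF := hA.tsum_eq_div_add hkp hkm hK hm hmeq i
  have hden : 0 < m + km i := add_pos hm (hkm i)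
  exact ⟨hF, hF ▸ div_pos (hkm i) hden, hF ▸ (div_lt_one hden).2 (by linarith)⟩

/-- Explicit value of the first-passage probabilities in the transient
regime: assume `α = Σ i, k⁺ i / k⁻ i > 1` and let `m` be the unique positive real with
`Σ r, k⁺ r / (m + k⁻ r) = 1`.  Then for every `i`, the first-passage probability satisfies
`F([i], o) = k⁻ i / (m + k⁻ i)`; in particular `0 < F([i], o) < 1`.  Here
`F(x,y) = Σ_{n≥1} fⁿ(x,y)` with `f¹ = p` and `fⁿ⁺¹(x,y) = Σ_{z≠y} p(x,z)·fⁿ(z,y)`. -/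
theorem stmt15 (d : ℕ) (hd : 1 ≤ d) (kp km : Fin d → ℝ)
    (hkp : ∀ i, 0 < kp i) (hkm : ∀ i, 0 < km i)
    (K : ℝ) (hK : K = ∑ i : Fin d, kp i)
    (hα : 1 < ∑ i : Fin d, kp i / km i)
    (m : ℝ) (hm : 0 < m) (hmeq : ∑ r : Fin d, kp r / (m + km r) = 1)
    (p : List (Fin d) → List (Fin d) → ℝ)
    (hp_root : ∀ i : Fin d, p [] [i] = kp i / K)
    (hp_up : ∀ (x : List (Fin d)) (i j : Fin d),
      p (x ++ [i]) (x ++ [i] ++ [j]) = kp j / (km i + K))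
    (hp_down : ∀ (x : List (Fin d)) (i : Fin d), p (x ++ [i]) x = km i / (km i + K))
    (hp_zero : ∀ x y : List (Fin d),
      (¬ ∃ i : Fin d, y = x ++ [i]) → (¬ ∃ i : Fin d, x = y ++ [i]) → p x y = 0)
    (f : ℕ → List (Fin d) → List (Fin d) → ℝ)
    (hf1 : ∀ x y : List (Fin d), f 1 x y = p x y)
    (hfs : ∀ n : ℕ, 1 ≤ n → ∀ x y : List (Fin d),
      f (n + 1) x y = ∑' z : List (Fin d), if z = y then 0 else p x z * f n z y) :
    ∀ i : Fin d,
      (∑' n : ℕ, f (n + 1) [i] []) = km i / (m + km i) ∧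
      0 < (∑' n : ℕ, f (n + 1) [i] []) ∧
      (∑' n : ℕ, f (n + 1) [i] []) < 1 :=
  stmt15_general d kp km hkp hkm K hK m hm hmeq p hp_up hp_down hp_zero f hf1 hfs
end

section
/- Almost-sure limiting monomer proportions (Theorem on composition): assume α > 1, let m be the unique positive real with Σᵣ k⁺(r)/(m + k⁻(r)) = 1, and set σ̄ᵢ = k⁺(i)/(m + k⁻(i)). Then for every i ∈ Fin d, ℙ-almost surely, the proportion cᵢ(Z_n)/|Z_n| of monomers of type i in the polymer converges to σ̄ᵢ as n → ∞ (with the ratio interpreted as 0 whenever Z_n = o; almost surely Z_n = o for only finitely many n, so this convention does not affect the limit). -/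
open MeasureTheory Filter

/-- The polymer state space `List (Fin d)` is a countable discrete space: every set is
measurable. -/
noncomputable instance listFinMeasurableSpace (d : ℕ) : MeasurableSpace (List (Fin d)) := ⊤


/-- Elementary bound `e^t ≤ 1 + t + 2 t² e^{|t|}`. -/
lemma exp_le_one_add_add (t : ℝ) : Real.exp t ≤ 1 + t + 2 * t ^ 2 * Real.exp |t| := by
  rcases le_or_gt |t| 1 with h | h
  · have hb := Real.exp_bound h (n := 2) (by norm_num)
    have h2 : ∑ m ∈ Finset.range 2, t ^ m / (m.factorial : ℝ) = 1 + t := by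
      simp [Finset.sum_range_succ]
    rw [h2] at hb
    have hub : Real.exp t - (1 + t) ≤ |t| ^ 2 * (3 / 2) := by
      have := abs_le.1 hb
      calc Real.exp t - (1 + t) ≤ |t| ^ 2 * ((2 + 1 : ℕ) / ((2 : ℕ).factorial * 2 : ℝ)) := this.2
        _ = |t| ^ 2 * (3 / 4) := by norm_num
        _ ≤ |t| ^ 2 * (3 / 2) := by nlinarith [sq_nonneg |t|]
    have h1 : (1 : ℝ) ≤ Real.exp |t| := Real.one_le_exp (abs_nonneg t)
    have hub2 : Real.exp t ≤ 1 + t + t ^ 2 * (3 / 2) := by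
      rw [sq_abs] at hub; linarith
    nlinarith [sq_nonneg t]
  · have h1 : (1 : ℝ) ≤ Real.exp |t| := Real.one_le_exp (abs_nonneg t)
    have ht2 : 1 ≤ t ^ 2 := by nlinarith [sq_abs t]
    rcases le_or_gt t 0 with ht | ht
    · have he : Real.exp t ≤ 1 := Real.exp_le_one_iff.2 ht
      have : -t ≤ 2 * t ^ 2 := by nlinarith [sq_abs t, abs_of_nonpos ht]
      nlinarith
    · have h2 : Real.exp t ≤ t ^ 2 * Real.exp t := by nlinarith [Real.exp_pos t]
      rw [abs_of_nonneg ht.le]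
      nlinarith [Real.exp_pos t]



/-- One-step sub-exponential bound: if `w` is a probability vector on `s` and `ξ` has mean 0
and `|ξ| ≤ C` on `s`, then `∑ w b * exp (l * ξ b) ≤ exp (2 l² C² e^{|l| C})`. -/
lemma step_mgf_bound {β : Type*} (s : Finset β) (w ξ : β → ℝ) (C l : ℝ) (hC : 0 ≤ C)
    (hw : ∀ b ∈ s, 0 ≤ w b) (hw1 : ∑ b ∈ s, w b = 1) (hmean : ∑ b ∈ s, w b * ξ b = 0)
    (hξ : ∀ b ∈ s, |ξ b| ≤ C) :
    ∑ b ∈ s, w b * Real.exp (l * ξ b) ≤ Real.exp (2 * l ^ 2 * C ^ 2 * Real.exp (|l| * C)) := by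
  have key : ∀ b ∈ s, w b * Real.exp (l * ξ b)
      ≤ w b * (1 + l * ξ b + 2 * l ^ 2 * C ^ 2 * Real.exp (|l| * C)) := by
    intro b hb
    apply mul_le_mul_of_nonneg_left _ (hw b hb)
    calc Real.exp (l * ξ b) ≤ 1 + l * ξ b + 2 * (l * ξ b) ^ 2 * Real.exp |l * ξ b| :=
          exp_le_one_add_add _
      _ ≤ 1 + l * ξ b + 2 * l ^ 2 * C ^ 2 * Real.exp (|l| * C) := by
          have h1 : |l * ξ b| ≤ |l| * C := by
            rw [abs_mul]
            exact mul_le_mul_of_nonneg_left (hξ b hb) (abs_nonneg l)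
          have h2 : Real.exp |l * ξ b| ≤ Real.exp (|l| * C) := Real.exp_le_exp.2 h1
          have h3 : (l * ξ b) ^ 2 ≤ l ^ 2 * C ^ 2 := by
            rw [mul_pow]
            apply mul_le_mul_of_nonneg_left _ (sq_nonneg l)
            calc ξ b ^ 2 = |ξ b| ^ 2 := (sq_abs _).symm
              _ ≤ C ^ 2 := by nlinarith [abs_nonneg (ξ b), hξ b hb]
          have h4 : 0 ≤ (l * ξ b) ^ 2 := sq_nonneg _
          nlinarith [Real.exp_pos (|l| * C), Real.exp_pos |l * ξ b|]
  calc ∑ b ∈ s, w b * Real.exp (l * ξ b)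
      ≤ ∑ b ∈ s, w b * (1 + l * ξ b + 2 * l ^ 2 * C ^ 2 * Real.exp (|l| * C)) :=
        Finset.sum_le_sum key
    _ = 1 + l * 0 + 2 * l ^ 2 * C ^ 2 * Real.exp (|l| * C) * 1 := by
        simp only [mul_add, Finset.sum_add_distrib, ← Finset.mul_sum, ← Finset.sum_mul]
        rw [hw1]
        have : ∑ x ∈ s, w x * (l * ξ x) = l * ∑ b ∈ s, w b * ξ b := by
          rw [Finset.mul_sum]; apply Finset.sum_congr rfl; intros; ring
        rw [this, hmean]; ring
    _ ≤ Real.exp (2 * l ^ 2 * C ^ 2 * Real.exp (|l| * C)) := by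
        have := Real.add_one_le_exp (2 * l ^ 2 * C ^ 2 * Real.exp (|l| * C))
        simp only [mul_zero, add_zero, mul_one]
        linarith


namespace Stmt18aux

variable {d : ℕ}

/-- possible successors of a state. -/
def nbhd (x : List (Fin d)) : Finset (List (Fin d)) :=
  (Finset.univ.image fun j : Fin d => x ++ [j]) ∪ (if x = [] then ∅ else {x.dropLast})

lemma mem_nbhd {x y : List (Fin d)} :
    y ∈ nbhd x ↔ (∃ j, y = x ++ [j]) ∨ (x ≠ [] ∧ y = x.dropLast) := by
  simp only [nbhd, Finset.mem_union, Finset.mem_image, Finset.mem_univ, true_and]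
  constructor
  · rintro (⟨j, rfl⟩ | h)
    · exact Or.inl ⟨j, rfl⟩
    · by_cases hx : x = []
      · simp [hx] at h
      · simp [hx] at h; exact Or.inr ⟨hx, h⟩
  · rintro (⟨j, rfl⟩ | ⟨hx, rfl⟩)
    · exact Or.inl ⟨j, rfl⟩
    · right; simp [hx]

/-- paths of the chain, most recent state first, root `[]` at the end. -/
def paths (d : ℕ) : ℕ → Finset (List (List (Fin d)))
  | 0 => {[([] : List (Fin d))]}
  | n + 1 => (paths d n).biUnion fun l => (nbhd l.headI).image fun y => y :: l

/-- weight (probability) of a path. -/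
def wt (p : List (Fin d) → List (Fin d) → ℝ) : List (List (Fin d)) → ℝ
  | [] => 0
  | [x] => if x = ([] : List (Fin d)) then 1 else 0
  | y :: x :: l => p x y * wt p (x :: l)

lemma wt_cons (p : List (Fin d) → List (Fin d) → ℝ) (y : List (Fin d))
    {t : List (List (Fin d))} (ht : t ≠ []) :
    wt p (y :: t) = p t.headI y * wt p t := by
  cases t with
  | nil => exact absurd rfl ht
  | cons x l => rfl

lemma paths_length {n : ℕ} {l : List (List (Fin d))} (hl : l ∈ paths d n) :
    l.length = n + 1 := by
  induction n generalizing l with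
  | zero => simp only [paths, Finset.mem_singleton] at hl; simp [hl]
  | succ n ih =>
      simp only [paths, Finset.mem_biUnion, Finset.mem_image] at hl
      obtain ⟨t, ht, y, -, rfl⟩ := hl
      simp [ih ht]

lemma paths_ne_nil {n : ℕ} {l : List (List (Fin d))} (hl : l ∈ paths d n) : l ≠ [] := by
  intro h; have := paths_length hl; rw [h] at this; simp at this

lemma paths_getD_last {n : ℕ} {l : List (List (Fin d))} (hl : l ∈ paths d n) :
    l.getD n [] = [] := by
  induction n generalizing l with
  | zero => simp only [paths, Finset.mem_singleton] at hl; simp [hl]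
  | succ n ih =>
      simp only [paths, Finset.mem_biUnion, Finset.mem_image] at hl
      obtain ⟨t, ht, y, -, rfl⟩ := hl
      simpa using ih ht

lemma headI_eq_getD {t : List (List (Fin d))} (ht : t ≠ []) : t.getD 0 [] = t.headI := by
  cases t with
  | nil => exact absurd rfl ht
  | cons x l => rfl

/-- corrector function, defined by recursion on the word from the top end. -/
def hcorr (u a : Fin d → ℝ) (h0 : ℝ) (x : List (Fin d)) : ℝ :=
  List.foldr (fun j acc => a j + u j * acc) h0 x.reverse

@[simp] lemma hcorr_nil (u a : Fin d → ℝ) (h0 : ℝ) : hcorr u a h0 [] = h0 := rfl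

lemma hcorr_concat (u a : Fin d → ℝ) (h0 : ℝ) (y : List (Fin d)) (j : Fin d) :
    hcorr u a h0 (y ++ [j]) = a j + u j * hcorr u a h0 y := by
  simp [hcorr]

lemma hcorr_bound (u a : Fin d → ℝ) (h0 : ℝ) (A U : ℝ) (hA : ∀ j, |a j| ≤ A)
    (hU : ∀ j, |u j| ≤ U) (hU1 : U < 1) (hU0 : 0 ≤ U) (hA0 : 0 ≤ A) (x : List (Fin d)) :
    |hcorr u a h0 x| ≤ |h0| + A / (1 - U) := by
  rw [hcorr]
  generalize x.reverse = l
  induction l with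
  | nil => simp [div_nonneg hA0 (by linarith : (0:ℝ) ≤ 1 - U)]
  | cons j l ih =>
      simp only [List.foldr_cons]
      have h1 : |a j + u j * List.foldr (fun j acc => a j + u j * acc) h0 l|
          ≤ A + U * (|h0| + A / (1 - U)) := by
        calc |a j + u j * List.foldr (fun j acc => a j + u j * acc) h0 l|
            ≤ |a j| + |u j| * |List.foldr (fun j acc => a j + u j * acc) h0 l| := by
              refine le_trans (abs_add_le _ _) ?_
              rw [abs_mul]
          _ ≤ A + U * (|h0| + A / (1 - U)) := by
              have h2 := hA j
              have h3 := hU j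
              have h4 : 0 ≤ |h0| + A / (1 - U) :=
                add_nonneg (abs_nonneg _) (div_nonneg hA0 (by linarith))
              have h5 : |u j| * |List.foldr (fun j acc => a j + u j * acc) h0 l|
                  ≤ U * (|h0| + A / (1 - U)) :=
                mul_le_mul h3 ih (abs_nonneg _) hU0
              linarith
      refine h1.trans ?_
      have hU1' : 0 < 1 - U := by linarith
      have hdiv : A / (1 - U) * (1 - U) = A := by field_simp
      nlinarith [abs_nonneg h0, div_nonneg hA0 hU1'.le]

/-- running letter-sum. -/
def Fc (φ u a : Fin d → ℝ) (h0 : ℝ) (x : List (Fin d)) : ℝ :=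
  (x.map φ).sum + hcorr u a h0 x

lemma sum_map_concat (φ : Fin d → ℝ) (y : List (Fin d)) (j : Fin d) :
    ((y ++ [j]).map φ).sum = (y.map φ).sum + φ j := by
  simp

end Stmt18aux

namespace Stmt18aux
variable {d : ℕ}
section P
variable (kp km : Fin d → ℝ) (K : ℝ) (p : List (Fin d) → List (Fin d) → ℝ)
variable (hkp : ∀ i, 0 < kp i) (hkm : ∀ i, 0 < km i) (hKpos : 0 < K)
variable (hp_root : ∀ i : Fin d, p [] [i] = kp i / K)
variable (hp_up : ∀ (x : List (Fin d)) (i j : Fin d),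
      p (x ++ [i]) (x ++ [i] ++ [j]) = kp j / (km i + K))
variable (hp_down : ∀ (x : List (Fin d)) (i : Fin d), p (x ++ [i]) x = km i / (km i + K))
variable (hp_zero : ∀ x y : List (Fin d),
      (¬ ∃ i : Fin d, y = x ++ [i]) → (¬ ∃ i : Fin d, x = y ++ [i]) → p x y = 0)

include hp_zero in
lemma p_supp {x y : List (Fin d)} (h : y ∉ nbhd x) : p x y = 0 := by
  apply hp_zero
  · intro ⟨j, hj⟩; exact h (mem_nbhd.2 (Or.inl ⟨j, hj⟩))
  · intro ⟨j, hj⟩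
    apply h
    refine mem_nbhd.2 (Or.inr ⟨by simp [hj], ?_⟩)
    rw [hj, List.dropLast_concat]

include hkp hkm hKpos hp_root hp_up hp_down hp_zero in
lemma p_nonneg (x y : List (Fin d)) : 0 ≤ p x y := by
  by_cases h1 : ∃ j : Fin d, y = x ++ [j]
  · obtain ⟨j, rfl⟩ := h1
    rcases List.eq_nil_or_concat x with rfl | ⟨z, r, rfl⟩
    · rw [List.nil_append, hp_root]
      have := hkp j
      positivity
    · rw [List.concat_eq_append, hp_up]
      have := hkm r
      have := hkp j
      positivity
  by_cases h2 : ∃ j : Fin d, x = y ++ [j]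
  · obtain ⟨j, rfl⟩ := h2
    rw [hp_down]
    have := hkm j
    positivity
  · rw [hp_zero x y h1 h2]

include hkm hKpos hp_root hp_up hp_down in
lemma sum_nbhd_p (hK : K = ∑ i : Fin d, kp i) (x : List (Fin d)) :
    ∑ y ∈ nbhd x, p x y = 1 := by
  have hinj : ∀ z : List (Fin d), ∀ a ∈ (Finset.univ : Finset (Fin d)),
      ∀ b ∈ (Finset.univ : Finset (Fin d)), z ++ [a] = z ++ [b] → a = b := by
    intro z j₁ _ j₂ _ h
    simpa using h
  rcases List.eq_nil_or_concat x with rfl | ⟨z, r, hx⟩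
  · have hnb : nbhd ([] : List (Fin d)) = Finset.univ.image fun j : Fin d => [] ++ [j] := by
      rw [nbhd]; simp
    rw [hnb, Finset.sum_image (fun a ha b hb h => hinj [] a ha b hb h)]
    simp only [List.nil_append, hp_root]
    rw [← Finset.sum_div, ← hK, div_self hKpos.ne']
  · rw [List.concat_eq_append] at hx
    subst hx
    have hne : (z ++ [r] : List (Fin d)) ≠ [] := by simp
    have hnb : nbhd (z ++ [r]) = (Finset.univ.image fun j : Fin d => z ++ [r] ++ [j]) ∪ {z} := by
      rw [nbhd, if_neg hne, List.dropLast_concat]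
    rw [hnb]
    have hdisj : Disjoint (Finset.univ.image fun j : Fin d => z ++ [r] ++ [j]) {z} := by
      simp only [Finset.disjoint_singleton_right, Finset.mem_image]
      rintro ⟨j, -, hj⟩
      have := congrArg List.length hj
      simp at this
    rw [Finset.sum_union hdisj,
      Finset.sum_image (fun a ha b hb h => hinj (z ++ [r]) a ha b hb h),
      Finset.sum_singleton, hp_down]
    simp only [hp_up]
    rw [← Finset.sum_div, ← hK, ← add_div]
    have h1 : 0 < km r + K := by have := hkm r; linarith
    rw [show K + km r = km r + K from add_comm _ _, div_self h1.ne']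
end P

end Stmt18aux

namespace Stmt18aux
variable {d : ℕ}
section Alg
variable (kp km : Fin d → ℝ) (K m : ℝ) (φ : Fin d → ℝ)
variable (hkp : ∀ i, 0 < kp i) (hkm : ∀ i, 0 < km i) (hm : 0 < m)
variable (hK : K = ∑ i : Fin d, kp i)
variable (hmeq : ∑ r : Fin d, kp r / (m + km r) = 1)

include hkm hm in
lemma denom_pos (j : Fin d) : 0 < m + km j := by have := hkm j; linarith

include hkp hkm hm hK hmeq in
lemma m_lt_K (hd : 1 ≤ d) : m < K := by
  have hne : (Finset.univ : Finset (Fin d)).Nonempty := by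
    rw [Finset.univ_nonempty_iff]
    exact Fin.pos_iff_nonempty.1 hd
  have hlt : ∑ r : Fin d, kp r / (m + km r) < ∑ r : Fin d, kp r / m := by
    apply Finset.sum_lt_sum_of_nonempty hne
    intro j _
    apply div_lt_div_of_pos_left (hkp j) hm
    have := hkm j; linarith
  rw [hmeq, ← Finset.sum_div, ← hK] at hlt
  rw [lt_div_iff₀ hm, one_mul] at hlt
  exact hlt

include hkm hm hK hmeq in
lemma sum_kp_u : ∑ j : Fin d, kp j * (km j / (m + km j)) = K - m := by
  have : ∀ j : Fin d, kp j * (km j / (m + km j)) = kp j - m * (kp j / (m + km j)) := by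
    intro j
    have h := denom_pos km m hkm hm j
    field_simp
    ring
  rw [Finset.sum_congr rfl fun j _ => this j, Finset.sum_sub_distrib, ← Finset.mul_sum, hmeq, ← hK]
  ring

/-- the drift constant. -/
noncomputable def dlt : ℝ := m * (∑ j : Fin d, kp j * φ j / (m + km j)) / (2 * K - m)
/-- the coefficient function. -/
noncomputable def ac (j : Fin d) : ℝ :=
  ((∑ r : Fin d, kp r * φ r) - km j * φ j - dlt kp km K m φ * (km j + K)) / (m + km j)
/-- the root value. -/
noncomputable def h0c : ℝ := ((∑ r : Fin d, kp r * φ r) - dlt kp km K m φ * K) / m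
/-- the contraction function -/
noncomputable def uc (j : Fin d) : ℝ := km j / (m + km j)

include hkp hkm hm hK hmeq in
lemma sum_kp_a (hd : 1 ≤ d) : ∑ j : Fin d, kp j * ac kp km K m φ j = 0 := by
  have h2Km : 2 * K - m ≠ 0 := by
    have := m_lt_K kp km K m hkp hkm hm hK hmeq hd; linarith
  have key : ∀ j : Fin d, kp j * ac kp km K m φ j =
      (∑ r : Fin d, kp r * φ r) * (kp j / (m + km j)) - kp j * φ j
        + m * (kp j * φ j / (m + km j))
        - dlt kp km K m φ * kp j - dlt kp km K m φ * (K - m) * (kp j / (m + km j)) := by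
    intro j
    have h := denom_pos km m hkm hm j
    rw [ac]
    field_simp
    ring
  rw [Finset.sum_congr rfl fun j _ => key j]
  have e1 : ∑ j : Fin d, ((∑ r : Fin d, kp r * φ r) * (kp j / (m + km j)) - kp j * φ j
        + m * (kp j * φ j / (m + km j))
        - dlt kp km K m φ * kp j - dlt kp km K m φ * (K - m) * (kp j / (m + km j)))
      = (∑ r : Fin d, kp r * φ r) * (∑ j : Fin d, kp j / (m + km j))
        - (∑ j : Fin d, kp j * φ j)
        + m * (∑ j : Fin d, kp j * φ j / (m + km j))
        - dlt kp km K m φ * (∑ j : Fin d, kp j)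
        - dlt kp km K m φ * (K - m) * (∑ j : Fin d, kp j / (m + km j)) := by
    simp only [Finset.sum_sub_distrib, Finset.sum_add_distrib, ← Finset.mul_sum]
  rw [e1, hmeq, ← hK, dlt]
  field_simp
  ring
end Alg
end Stmt18aux
namespace Stmt18aux
section Step
variable {d : ℕ}
variable (kp km : Fin d → ℝ) (K m : ℝ) (φ : Fin d → ℝ)
variable (p : List (Fin d) → List (Fin d) → ℝ)

lemma sum_nbhd_mul (hd : 1 ≤ d)
    (hkp : ∀ i, 0 < kp i) (hkm : ∀ i, 0 < km i) (hm : 0 < m)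
    (hK : K = ∑ i : Fin d, kp i) (hKpos : 0 < K)
    (hmeq : ∑ r : Fin d, kp r / (m + km r) = 1)
    (hp_root : ∀ i : Fin d, p [] [i] = kp i / K)
    (hp_up : ∀ (x : List (Fin d)) (i j : Fin d),
      p (x ++ [i]) (x ++ [i] ++ [j]) = kp j / (km i + K))
    (hp_down : ∀ (x : List (Fin d)) (i : Fin d), p (x ++ [i]) x = km i / (km i + K))
    (x : List (Fin d)) :
    ∑ y ∈ nbhd x, p x y * Fc φ (uc km m) (ac kp km K m φ) (h0c kp km K m φ) y
      = Fc φ (uc km m) (ac kp km K m φ) (h0c kp km K m φ) x + dlt kp km K m φ := by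
  set δ := dlt kp km K m φ with hδ
  set a := ac kp km K m φ with ha
  set u := uc km m with hu
  set h0 := h0c kp km K m φ with hh0
  set F := Fc φ u a h0 with hF
  have hSa : ∑ j : Fin d, kp j * a j = 0 := sum_kp_a kp km K m φ hkp hkm hm hK hmeq hd
  have hSu : ∑ j : Fin d, kp j * u j = K - m := by
    have := sum_kp_u kp km K m hkm hm hK hmeq
    simpa [hu, uc] using this
  have hinj : ∀ z : List (Fin d), ∀ a' ∈ (Finset.univ : Finset (Fin d)),
      ∀ b ∈ (Finset.univ : Finset (Fin d)), z ++ [a'] = z ++ [b] → a' = b := by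
    intro z j₁ _ j₂ _ h
    simpa using h
  have hFconcat : ∀ (y : List (Fin d)) (j : Fin d),
      F (y ++ [j]) = (y.map φ).sum + φ j + (a j + u j * hcorr u a h0 y) := by
    intro y j
    rw [hF, Fc, hcorr_concat]
    simp
  rcases List.eq_nil_or_concat x with rfl | ⟨z, r, hx⟩
  · have hnb : nbhd ([] : List (Fin d)) = Finset.univ.image fun j : Fin d => [] ++ [j] := by
      rw [nbhd]; simp
    rw [hnb, Finset.sum_image (fun a ha b hb h => hinj [] a ha b hb h)]
    have hterm : ∀ j : Fin d, p [] ([] ++ [j]) * F ([] ++ [j])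
        = (kp j * φ j + kp j * a j + (kp j * u j) * h0) / K := by
      intro j
      rw [hFconcat [] j]
      simp only [List.nil_append] at *
      rw [hp_root j]
      simp only [List.map_nil, List.sum_nil, hcorr_nil, zero_add]
      field_simp
      ring
    rw [Finset.sum_congr rfl fun j _ => hterm j]
    rw [← Finset.sum_div, Finset.sum_add_distrib, Finset.sum_add_distrib, ← Finset.sum_mul,
      hSa, hSu]
    have hFnil : F [] = h0 := by rw [hF, Fc]; simp
    rw [hFnil, hh0, h0c, ← hδ]
    have hm' : m ≠ 0 := hm.ne'
    have hK' : K ≠ 0 := hKpos.ne'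
    field_simp
    ring
  · rw [List.concat_eq_append] at hx
    subst hx
    have hkmr := hkm r
    have hq : (0:ℝ) < m + km r := by linarith
    have hD : (0:ℝ) < km r + K := by linarith
    have hne : (z ++ [r] : List (Fin d)) ≠ [] := by simp
    have hnb : nbhd (z ++ [r]) = (Finset.univ.image fun j : Fin d => z ++ [r] ++ [j]) ∪ {z} := by
      rw [nbhd, if_neg hne, List.dropLast_concat]
    have hdisj : Disjoint (Finset.univ.image fun j : Fin d => z ++ [r] ++ [j]) {z} := by
      simp only [Finset.disjoint_singleton_right, Finset.mem_image]
      rintro ⟨j, -, hj⟩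
      have := congrArg List.length hj
      simp at this
    rw [hnb, Finset.sum_union hdisj,
      Finset.sum_image (fun a ha b hb h => hinj (z ++ [r]) a ha b hb h),
      Finset.sum_singleton, hp_down]
    have hsum : ∀ S hxv : ℝ,
        ∑ j : Fin d, kp j / (km r + K) * (S + φ j + (a j + u j * hxv))
          = (K * S + (∑ j : Fin d, kp j * φ j) + (K - m) * hxv) / (km r + K) := by
      intro S hxv
      have hterm : ∀ j : Fin d, kp j / (km r + K) * (S + φ j + (a j + u j * hxv))
          = (kp j * S + kp j * φ j + (kp j * a j + (kp j * u j) * hxv)) / (km r + K) := by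
        intro j; ring
      rw [Finset.sum_congr rfl fun j _ => hterm j, ← Finset.sum_div]
      congr 1
      rw [Finset.sum_add_distrib, Finset.sum_add_distrib, Finset.sum_add_distrib,
        ← Finset.sum_mul, ← Finset.sum_mul, hSa, hSu, ← hK]
      ring
    have hrw : ∀ j : Fin d, p (z ++ [r]) (z ++ [r] ++ [j]) * F (z ++ [r] ++ [j])
        = kp j / (km r + K) * (((z ++ [r]).map φ).sum + φ j
            + (a j + u j * hcorr u a h0 (z ++ [r]))) := by
      intro j
      rw [hFconcat (z ++ [r]) j, hp_up z r j]
    rw [Finset.sum_congr rfl fun j _ => hrw j, hsum]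
    have hFz : F z = (z.map φ).sum + hcorr u a h0 z := rfl
    rw [hFz, hFconcat z r]
    have hmap : ((z ++ [r]).map φ).sum = (z.map φ).sum + φ r := by simp
    rw [hmap, hcorr_concat]
    have hur : u r = km r / (m + km r) := rfl
    have har : a r = ((∑ j : Fin d, kp j * φ j) - km r * φ r - δ * (km r + K)) / (m + km r) := rfl
    rw [hur, har]
    field_simp
    ring
end Step
end Stmt18aux

namespace Stmt18aux
section Paths
variable {d : ℕ} (p : List (Fin d) → List (Fin d) → ℝ)

lemma wt_nonneg (hpnn : ∀ x y, 0 ≤ p x y) : ∀ l, 0 ≤ wt p l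
  | [] => le_refl 0
  | [x] => by rw [wt]; split <;> norm_num
  | y :: x :: l => mul_nonneg (hpnn x y) (wt_nonneg hpnn (x :: l))

lemma sum_paths_succ (g : List (List (Fin d)) → ℝ) (n : ℕ) :
    ∑ l ∈ paths d (n + 1), g l = ∑ t ∈ paths d n, ∑ y ∈ nbhd t.headI, g (y :: t) := by
  rw [paths, Finset.sum_biUnion]
  · apply Finset.sum_congr rfl
    intro t _
    rw [Finset.sum_image]
    intro a _ b _ h
    exact (List.cons.injEq _ _ _ _ ▸ h).1
  · intro t1 h1 t2 h2 hne
    simp only [Function.onFun]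
    rw [Finset.disjoint_left]
    intro w hw1 hw2
    simp only [Finset.mem_image] at hw1 hw2
    obtain ⟨y1, -, rfl⟩ := hw1
    obtain ⟨y2, -, h⟩ := hw2
    exact hne ((List.cons.injEq _ _ _ _ ▸ h.symm).2 ▸ rfl)

lemma sum_wt_one (hpnn : ∀ x y, 0 ≤ p x y)
    (hsum1 : ∀ x, ∑ y ∈ nbhd x, p x y = 1) :
    ∀ n, ∑ l ∈ paths d n, wt p l = 1 := by
  intro n
  induction n with
  | zero => simp [paths, wt]
  | succ n ih =>
      rw [sum_paths_succ]
      have : ∀ t ∈ paths d n, ∑ y ∈ nbhd t.headI, wt p (y :: t) = wt p t := by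
        intro t ht
        have hne := paths_ne_nil ht
        calc ∑ y ∈ nbhd t.headI, wt p (y :: t)
            = ∑ y ∈ nbhd t.headI, p t.headI y * wt p t := by
              exact Finset.sum_congr rfl fun y _ => wt_cons p y hne
          _ = wt p t := by rw [← Finset.sum_mul, hsum1, one_mul]
      rw [Finset.sum_congr rfl this, ih]

set_option maxHeartbeats 1000000 in
/-- MGF bound along paths, with abstract harmonic-plus-drift function `F`. -/
lemma mgf_bound (F : List (Fin d) → ℝ) (δ C lam : ℝ) (hC : 0 ≤ C)
    (hpnn : ∀ x y, 0 ≤ p x y)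
    (hsum1 : ∀ x, ∑ y ∈ nbhd x, p x y = 1)
    (hstep : ∀ x, ∑ y ∈ nbhd x, p x y * F y = F x + δ)
    (hCb : ∀ x, ∀ y ∈ nbhd x, |F y - F x - δ| ≤ C) :
    ∀ n, ∑ l ∈ paths d n, wt p l * Real.exp (lam * (F l.headI - δ * n))
      ≤ Real.exp (lam * F [])
          * Real.exp (n * (2 * lam ^ 2 * C ^ 2 * Real.exp (|lam| * C))) := by
  set KL := 2 * lam ^ 2 * C ^ 2 * Real.exp (|lam| * C) with hKL
  have hKL0 : 0 ≤ KL := by positivity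
  intro n
  induction n with
  | zero => simp [paths, wt]
  | succ n ih =>
      rw [sum_paths_succ]
      have hinner : ∀ t ∈ paths d n,
          ∑ y ∈ nbhd t.headI, wt p (y :: t) * Real.exp (lam * (F (y :: t).headI - δ * ((n : ℝ) + 1)))
            ≤ wt p t * Real.exp (lam * (F t.headI - δ * (n : ℝ))) * Real.exp KL := by
        intro t ht
        have hne := paths_ne_nil ht
        set x := t.headI with hx
        have e1 : ∀ y ∈ nbhd x,
            wt p (y :: t) * Real.exp (lam * (F (y :: t).headI - δ * (n + 1)))
              = wt p t * Real.exp (lam * (F x - δ * n))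
                  * (p x y * Real.exp (lam * (F y - F x - δ))) := by
          intro y _
          rw [wt_cons p y hne]
          simp only [List.headI_cons]
          have heq : lam * (F y - δ * ((n : ℝ) + 1)) =
              lam * (F x - δ * (n : ℝ)) + lam * (F y - F x - δ) := by ring
          push_cast
          rw [heq, Real.exp_add]
          ring
        rw [Finset.sum_congr rfl e1, ← Finset.mul_sum]
        have hmean : ∑ y ∈ nbhd x, p x y * (F y - F x - δ) = 0 := by
          have : ∀ y ∈ nbhd x, p x y * (F y - F x - δ)
              = p x y * F y - p x y * (F x + δ) := fun y _ => by ring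
          rw [Finset.sum_congr rfl this, Finset.sum_sub_distrib, hstep,
            ← Finset.sum_mul, hsum1, one_mul]
          ring
        have hb := step_mgf_bound (nbhd x) (p x) (fun y => F y - F x - δ) C lam hC
          (fun y _ => hpnn x y) (hsum1 x) hmean (fun y hy => hCb x y hy)
        have hw0 : 0 ≤ wt p t * Real.exp (lam * (F x - δ * n)) := by
          have := wt_nonneg p hpnn t
          positivity
        calc wt p t * Real.exp (lam * (F x - δ * n))
              * ∑ y ∈ nbhd x, p x y * Real.exp (lam * (F y - F x - δ))
            ≤ wt p t * Real.exp (lam * (F x - δ * n)) * Real.exp KL :=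
              mul_le_mul_of_nonneg_left hb hw0
          _ = _ := rfl
      push_cast
      calc ∑ t ∈ paths d n, ∑ y ∈ nbhd t.headI,
            wt p (y :: t) * Real.exp (lam * (F (y :: t).headI - δ * ((n : ℝ) + 1)))
          ≤ ∑ t ∈ paths d n, wt p t * Real.exp (lam * (F t.headI - δ * n)) * Real.exp KL :=
            Finset.sum_le_sum hinner
        _ = (∑ t ∈ paths d n, wt p t * Real.exp (lam * (F t.headI - δ * n))) * Real.exp KL := by
            rw [Finset.sum_mul]
        _ ≤ Real.exp (lam * F []) * Real.exp (n * KL) * Real.exp KL := by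
            apply mul_le_mul_of_nonneg_right ih (Real.exp_pos _).le
        _ = Real.exp (lam * F []) * Real.exp (((n : ℝ) + 1) * KL) := by
            rw [mul_assoc, ← Real.exp_add]
            ring_nf
end Paths
end Stmt18aux

namespace Stmt18aux
section Chern
variable {d : ℕ} (p : List (Fin d) → List (Fin d) → ℝ) (F : List (Fin d) → ℝ) (δ C : ℝ)

set_option maxHeartbeats 1000000 in
lemma chernoff_half (hC : 0 ≤ C)
    (hpnn : ∀ x y, 0 ≤ p x y)
    (hsum1 : ∀ x, ∑ y ∈ nbhd x, p x y = 1)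
    (hstep : ∀ x, ∑ y ∈ nbhd x, p x y * F y = F x + δ)
    (hCb : ∀ x, ∀ y ∈ nbhd x, |F y - F x - δ| ≤ C)
    (lam' c : ℝ) (n : ℕ) :
    ∑ l ∈ (paths d n).filter (fun l => c ≤ lam' * (F l.headI - F [] - δ * n)), wt p l
      ≤ Real.exp ((n : ℝ) * (2 * lam' ^ 2 * C ^ 2 * Real.exp (|lam'| * C)) - c) := by
  set KL := 2 * lam' ^ 2 * C ^ 2 * Real.exp (|lam'| * C) with hKL
  have step1 : ∀ l ∈ (paths d n).filter (fun l => c ≤ lam' * (F l.headI - F [] - δ * n)),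
      wt p l ≤ wt p l * Real.exp (lam' * (F l.headI - δ * n) + (-(lam' * F []) - c)) := by
    intro l hl
    rw [Finset.mem_filter] at hl
    have harg : 0 ≤ lam' * (F l.headI - δ * n) + (-(lam' * F []) - c) := by
      have := hl.2
      nlinarith [hl.2]
    have h1 : (1 : ℝ) ≤ Real.exp (lam' * (F l.headI - δ * n) + (-(lam' * F []) - c)) := by
      rw [← Real.exp_zero]
      exact Real.exp_le_exp.2 harg
    nlinarith [wt_nonneg p hpnn l]
  have step2 : ∀ l : List (List (Fin d)),
      wt p l * Real.exp (lam' * (F l.headI - δ * n) + (-(lam' * F []) - c))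
      = wt p l * Real.exp (lam' * (F l.headI - δ * n)) * Real.exp (-(lam' * F []) - c) := by
    intro l
    rw [Real.exp_add]
    ring
  calc ∑ l ∈ (paths d n).filter (fun l => c ≤ lam' * (F l.headI - F [] - δ * n)), wt p l
      ≤ ∑ l ∈ (paths d n).filter (fun l => c ≤ lam' * (F l.headI - F [] - δ * n)),
          wt p l * Real.exp (lam' * (F l.headI - δ * n)) * Real.exp (-(lam' * F []) - c) := by
        refine (Finset.sum_le_sum step1).trans ?_
        apply le_of_eq
        exact Finset.sum_congr rfl fun l _ => step2 l
    _ ≤ ∑ l ∈ paths d n,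
          wt p l * Real.exp (lam' * (F l.headI - δ * n)) * Real.exp (-(lam' * F []) - c) := by
        apply Finset.sum_le_sum_of_subset_of_nonneg (Finset.filter_subset _ _)
        intro l hl _
        have := wt_nonneg p hpnn l
        positivity
    _ = (∑ l ∈ paths d n, wt p l * Real.exp (lam' * (F l.headI - δ * n)))
          * Real.exp (-(lam' * F []) - c) := by rw [Finset.sum_mul]
    _ ≤ Real.exp (lam' * F []) * Real.exp ((n : ℝ) * KL) * Real.exp (-(lam' * F []) - c) := by
        apply mul_le_mul_of_nonneg_right _ (Real.exp_pos _).le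
        exact mgf_bound p F δ C lam' hC hpnn hsum1 hstep hCb n
    _ = Real.exp ((n : ℝ) * KL - c) := by
        rw [← Real.exp_add, ← Real.exp_add]
        ring_nf

set_option maxHeartbeats 1000000 in
lemma chernoff_abs (hC : 0 ≤ C)
    (hpnn : ∀ x y, 0 ≤ p x y)
    (hsum1 : ∀ x, ∑ y ∈ nbhd x, p x y = 1)
    (hstep : ∀ x, ∑ y ∈ nbhd x, p x y * F y = F x + δ)
    (hCb : ∀ x, ∀ y ∈ nbhd x, |F y - F x - δ| ≤ C)
    (lam ε : ℝ) (hlam : 0 < lam) (n : ℕ) :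
    ∑ l ∈ (paths d n).filter (fun l => ε * n ≤ |F l.headI - F [] - δ * n|), wt p l
      ≤ 2 * Real.exp ((n : ℝ) * (2 * lam ^ 2 * C ^ 2 * Real.exp (|lam| * C))
          - lam * (ε * n)) := by
  set c := lam * (ε * n) with hc
  set A := (paths d n).filter (fun l => c ≤ lam * (F l.headI - F [] - δ * n)) with hA
  set B := (paths d n).filter (fun l => c ≤ (-lam) * (F l.headI - F [] - δ * n)) with hB
  have hsub : (paths d n).filter (fun l => ε * n ≤ |F l.headI - F [] - δ * n|) ⊆ A ∪ B := by
    intro l hl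
    rw [Finset.mem_filter] at hl
    rcases le_abs.1 hl.2 with h | h
    · exact Finset.mem_union_left _ (Finset.mem_filter.2 ⟨hl.1, by nlinarith⟩)
    · exact Finset.mem_union_right _ (Finset.mem_filter.2 ⟨hl.1, by nlinarith⟩)
  have hnn : ∀ l ∈ A ∪ B, 0 ≤ wt p l := fun l _ => wt_nonneg p hpnn l
  have hAB : ∑ l ∈ A ∪ B, wt p l ≤ ∑ l ∈ A, wt p l + ∑ l ∈ B, wt p l := by
    have := Finset.sum_union_inter (s₁ := A) (s₂ := B) (f := wt p)
    have hint : 0 ≤ ∑ l ∈ A ∩ B, wt p l :=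
      Finset.sum_nonneg fun l _ => wt_nonneg p hpnn l
    linarith
  have hAbd := chernoff_half p F δ C hC hpnn hsum1 hstep hCb lam c n
  have hBbd := chernoff_half p F δ C hC hpnn hsum1 hstep hCb (-lam) c n
  rw [← hA] at hAbd
  rw [← hB] at hBbd
  have hKLeq : 2 * (-lam) ^ 2 * C ^ 2 * Real.exp (|(-lam)| * C)
      = 2 * lam ^ 2 * C ^ 2 * Real.exp (|lam| * C) := by
    rw [abs_neg]; ring
  rw [hKLeq] at hBbd
  calc ∑ l ∈ (paths d n).filter (fun l => ε * n ≤ |F l.headI - F [] - δ * n|), wt p l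
      ≤ ∑ l ∈ A ∪ B, wt p l :=
        Finset.sum_le_sum_of_subset_of_nonneg hsub fun l hl _ => wt_nonneg p hpnn l
    _ ≤ ∑ l ∈ A, wt p l + ∑ l ∈ B, wt p l := hAB
    _ ≤ 2 * Real.exp ((n : ℝ) * (2 * lam ^ 2 * C ^ 2 * Real.exp (|lam| * C)) - c) := by
        linarith
end Chern
end Stmt18aux

namespace Stmt18aux
section Meas
variable {d : ℕ} (p : List (Fin d) → List (Fin d) → ℝ)

/-- the cylinder event of a path. -/
def cylE (n : ℕ) (l : List (List (Fin d))) : Set (ℕ → List (Fin d)) :=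
  {ω | ∀ k ≤ n, ω k = l.getD (n - k) []}

lemma measurableSet_cylE (n : ℕ) (l : List (List (Fin d))) : MeasurableSet (cylE n l) := by
  have : cylE n l = ⋂ k ∈ Set.Iic n, (fun ω : ℕ → List (Fin d) => ω k) ⁻¹' {l.getD (n - k) []} := by
    ext ω
    simp [cylE, Set.mem_iInter, Set.mem_Iic]
  rw [this]
  exact MeasurableSet.biInter (Set.to_countable _)
    fun k _ => (measurable_pi_apply k) (by trivial)

lemma wt_eq_prod {n : ℕ} {l : List (List (Fin d))} (hl : l ∈ paths d n) :
    wt p l = ∏ k ∈ Finset.range n, p (l.getD (n - k) []) (l.getD (n - k - 1) []) := by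
  induction n generalizing l with
  | zero =>
      simp only [paths, Finset.mem_singleton] at hl
      subst hl
      simp [wt]
  | succ n ih =>
      simp only [paths, Finset.mem_biUnion, Finset.mem_image] at hl
      obtain ⟨t, ht, y, hy, rfl⟩ := hl
      have htne := paths_ne_nil ht
      rw [wt_cons p y htne, Finset.prod_range_succ]
      have h1 : ((y :: t).getD (n + 1 - n - 1) []) = y := by
        simp
      have h2 : ((y :: t).getD (n + 1 - n) []) = t.headI := by
        have : n + 1 - n = 1 := by omega
        rw [this, List.getD_cons_succ, headI_eq_getD htne]
      have h3 : ∀ k ∈ Finset.range n,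
          p ((y :: t).getD (n + 1 - k) []) ((y :: t).getD (n + 1 - k - 1) [])
            = p (t.getD (n - k) []) (t.getD (n - k - 1) []) := by
        intro k hk
        rw [Finset.mem_range] at hk
        have e1 : n + 1 - k = (n - k) + 1 := by omega
        rw [e1]
        have e2 : n - k + 1 - 1 = (n - k - 1) + 1 := by omega
        rw [e2, List.getD_cons_succ, List.getD_cons_succ]
      rw [Finset.prod_congr rfl h3, h1, h2, ih ht]
      ring

lemma lists_eq_of_getD {n : ℕ} {l l' : List (List (Fin d))}
    (h1 : l.length = n + 1) (h2 : l'.length = n + 1)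
    (h : ∀ k ≤ n, l.getD (n - k) [] = l'.getD (n - k) []) : l = l' := by
  apply List.ext_getElem (h1.trans h2.symm)
  intro j hj hj'
  have hjn : j ≤ n := by omega
  have := h (n - j) (by omega)
  have hnj : n - (n - j) = j := by omega
  rw [hnj] at this
  rwa [List.getD_eq_getElem l [] (by omega), List.getD_eq_getElem l' [] (by omega)] at this

lemma cylE_disjoint {n : ℕ} {l l' : List (List (Fin d))}
    (hl : l ∈ paths d n) (hl' : l' ∈ paths d n) (hne : l ≠ l') :
    Disjoint (cylE n l) (cylE (d := d) n l') := by
  rw [Set.disjoint_left]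
  intro ω hω hω'
  apply hne
  exact lists_eq_of_getD (paths_length hl) (paths_length hl')
    fun k hk => (hω k hk).symm.trans (hω' k hk)

variable (P : Measure (ℕ → List (Fin d))) [IsProbabilityMeasure P]

lemma P_cylE
    (hcyl : ∀ (n : ℕ) (w : ℕ → List (Fin d)),
      P {ω | ∀ k ≤ n, ω k = w k}
        = ENNReal.ofReal ((if w 0 = ([] : List (Fin d)) then (1 : ℝ) else 0) *
            ∏ k ∈ Finset.range n, p (w k) (w (k + 1))))
    {n : ℕ} {l : List (List (Fin d))} (hl : l ∈ paths d n) :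
    P (cylE n l) = ENNReal.ofReal (wt p l) := by
  have h := hcyl n (fun k => l.getD (n - k) [])
  have hset : {ω : ℕ → List (Fin d) | ∀ k ≤ n, ω k = l.getD (n - k) []} = cylE n l := rfl
  rw [hset] at h
  rw [h]
  congr 1
  have hroot : l.getD (n - 0) [] = [] := by
    rw [Nat.sub_zero]
    exact paths_getD_last hl
  rw [if_pos hroot, one_mul, wt_eq_prod p hl]
  exact Finset.prod_congr rfl fun k _ => by rw [Nat.sub_sub]

set_option maxHeartbeats 800000 in
lemma P_marginal
    (hpnn : ∀ x y, 0 ≤ p x y)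
    (hsum1 : ∀ x, ∑ y ∈ nbhd x, p x y = 1)
    (hcyl : ∀ (n : ℕ) (w : ℕ → List (Fin d)),
      P {ω | ∀ k ≤ n, ω k = w k}
        = ENNReal.ofReal ((if w 0 = ([] : List (Fin d)) then (1 : ℝ) else 0) *
            ∏ k ∈ Finset.range n, p (w k) (w (k + 1))))
    (Q : List (Fin d) → Prop) [DecidablePred Q] (n : ℕ) :
    P {ω | Q (ω n)}
      ≤ ENNReal.ofReal (∑ l ∈ (paths d n).filter (fun l => Q l.headI), wt p l) := by
  classical
  set U : Set (ℕ → List (Fin d)) := ⋃ l ∈ paths d n, cylE n l with hU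
  have hpd : (↑(paths d n) : Set (List (List (Fin d)))).PairwiseDisjoint (cylE n) := by
    intro a ha b hb hne
    exact cylE_disjoint (Finset.mem_coe.1 ha) (Finset.mem_coe.1 hb) hne
  have hUmeas : MeasurableSet U :=
    MeasurableSet.biUnion (Finset.countable_toSet _) fun l _ => measurableSet_cylE n l
  have hPU : P U = 1 := by
    rw [hU, measure_biUnion_finset hpd fun l _ => measurableSet_cylE n l]
    have : ∀ l ∈ paths d n, P (cylE n l) = ENNReal.ofReal (wt p l) :=
      fun l hl => P_cylE p P hcyl hl
    rw [Finset.sum_congr rfl this, ← ENNReal.ofReal_sum_of_nonneg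
      (fun l _ => wt_nonneg p hpnn l), sum_wt_one p hpnn hsum1 n]
    simp
  have hPUc : P Uᶜ = 0 := by
    rw [measure_compl hUmeas (measure_ne_top P U), hPU]
    simp
  have hsub : {ω : ℕ → List (Fin d) | Q (ω n)}
      ⊆ (⋃ l ∈ (paths d n).filter (fun l => Q l.headI), cylE n l) ∪ Uᶜ := by
    intro ω hω
    by_cases hωU : ω ∈ U
    · left
      rw [hU, Set.mem_iUnion₂] at hωU
      obtain ⟨l, hl, hωl⟩ := hωU
      rw [Set.mem_iUnion₂]
      refine ⟨l, ?_, hωl⟩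
      rw [Finset.mem_filter]
      refine ⟨hl, ?_⟩
      have hωn : ω n = l.getD 0 [] := by
        have := hωl n le_rfl
        simpa using this
      rw [headI_eq_getD (paths_ne_nil hl)] at hωn
      rwa [← hωn]
    · exact Or.inr hωU
  calc P {ω : ℕ → List (Fin d) | Q (ω n)}
      ≤ P ((⋃ l ∈ (paths d n).filter (fun l => Q l.headI), cylE n l) ∪ Uᶜ) :=
        measure_mono hsub
    _ ≤ P (⋃ l ∈ (paths d n).filter (fun l => Q l.headI), cylE n l) + P Uᶜ :=
        measure_union_le _ _
    _ = P (⋃ l ∈ (paths d n).filter (fun l => Q l.headI), cylE n l) := by rw [hPUc, add_zero]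
    _ = ∑ l ∈ (paths d n).filter (fun l => Q l.headI), P (cylE n l) :=
        measure_biUnion_finset (hpd.subset (by
          intro l hl
          exact Finset.mem_coe.2 (Finset.mem_of_mem_filter l (Finset.mem_coe.1 hl))))
          fun l _ => measurableSet_cylE n l
    _ = ENNReal.ofReal (∑ l ∈ (paths d n).filter (fun l => Q l.headI), wt p l) := by
        rw [show (∑ l ∈ (paths d n).filter (fun l => Q l.headI), P (cylE n l))
            = ∑ l ∈ (paths d n).filter (fun l => Q l.headI), ENNReal.ofReal (wt p l) from
          Finset.sum_congr rfl fun l hl => P_cylE p P hcyl (Finset.mem_of_mem_filter l hl)]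
        exact (ENNReal.ofReal_sum_of_nonneg (fun l _ => wt_nonneg p hpnn l)).symm
end Meas
end Stmt18aux

namespace Stmt18aux
section BC
variable {d : ℕ} (p : List (Fin d) → List (Fin d) → ℝ)
variable (P : Measure (ℕ → List (Fin d))) [IsProbabilityMeasure P]
variable (F : List (Fin d) → ℝ) (δ C : ℝ)

/-- Choice of the Chernoff parameter: for `ε > 0` there are `lam > 0`, `ρ > 0` with
`n*KL(lam) - lam*(ε*n) ≤ -ρ*n`. -/
lemma exists_lam (hC : 0 ≤ C) {ε : ℝ} (hε : 0 < ε) :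
    ∃ lam ρ : ℝ, 0 < lam ∧ 0 < ρ ∧ ∀ n : ℕ,
      (n : ℝ) * (2 * lam ^ 2 * C ^ 2 * Real.exp (|lam| * C)) - lam * (ε * n) ≤ -(ρ * n) := by
  have hden : (0:ℝ) < 4 * (C ^ 2 * Real.exp C + 1) := by positivity
  set lam := min 1 (ε / (4 * (C ^ 2 * Real.exp C + 1))) with hlam
  have hlam0 : 0 < lam := lt_min one_pos (div_pos hε hden)
  have hlam1 : lam ≤ 1 := min_le_left _ _
  have hlam2 : lam ≤ ε / (4 * (C ^ 2 * Real.exp C + 1)) := min_le_right _ _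
  refine ⟨lam, lam * ε / 2, hlam0, by positivity, fun n => ?_⟩
  have habs : |lam| = lam := abs_of_pos hlam0
  have hKL : 2 * lam ^ 2 * C ^ 2 * Real.exp (|lam| * C) ≤ lam * ε / 2 := by
    rw [habs]
    have h1 : Real.exp (lam * C) ≤ Real.exp C := by
      apply Real.exp_le_exp.2
      nlinarith
    have h2 : 2 * lam ^ 2 * C ^ 2 * Real.exp (lam * C) ≤ 2 * lam ^ 2 * C ^ 2 * Real.exp C := by
      apply mul_le_mul_of_nonneg_left h1 (by positivity)
    have h3 : lam * (4 * (C ^ 2 * Real.exp C + 1)) ≤ ε := by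
      rw [← le_div_iff₀ hden]; exact hlam2
    nlinarith [sq_nonneg lam, Real.exp_pos C, hlam0]
  have hn : (0:ℝ) ≤ (n:ℝ) := Nat.cast_nonneg n
  nlinarith [mul_le_mul_of_nonneg_left hKL hn]

set_option maxHeartbeats 1000000 in
lemma ae_eventually_close
    (hpnn : ∀ x y, 0 ≤ p x y)
    (hsum1 : ∀ x, ∑ y ∈ nbhd x, p x y = 1)
    (hstep : ∀ x, ∑ y ∈ nbhd x, p x y * F y = F x + δ)
    (hC : 0 ≤ C)
    (hCb : ∀ x, ∀ y ∈ nbhd x, |F y - F x - δ| ≤ C)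
    (hcyl : ∀ (n : ℕ) (w : ℕ → List (Fin d)),
      P {ω | ∀ k ≤ n, ω k = w k}
        = ENNReal.ofReal ((if w 0 = ([] : List (Fin d)) then (1 : ℝ) else 0) *
            ∏ k ∈ Finset.range n, p (w k) (w (k + 1))))
    {ε : ℝ} (hε : 0 < ε) :
    ∀ᵐ ω ∂P, ∀ᶠ n : ℕ in atTop, |F (ω n) - F [] - δ * n| < ε * n := by
  classical
  obtain ⟨lam, ρ, hlam, hρ, hbd⟩ := exists_lam C hC hε
  set s : ℕ → Set (ℕ → List (Fin d)) :=
    fun n => {ω | ε * n ≤ |F (ω n) - F [] - δ * n|} with hs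
  have hsn : ∀ n, P (s n) ≤ ENNReal.ofReal (2 * Real.exp (-(ρ * n))) := by
    intro n
    have h1 := P_marginal p P hpnn hsum1 hcyl
      (fun x => ε * n ≤ |F x - F [] - δ * n|) n
    refine h1.trans ?_
    apply ENNReal.ofReal_le_ofReal
    have h2 := chernoff_abs p F δ C hC hpnn hsum1 hstep hCb lam ε hlam n
    refine h2.trans ?_
    have := hbd n
    have := Real.exp_le_exp.2 (hbd n)
    linarith
  have hsum : ∑' n, P (s n) ≠ ⊤ := by
    have hnn : ∀ n : ℕ, 0 ≤ 2 * Real.exp (-(ρ * n)) := fun n => by positivity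
    have hgeom : Summable (fun n : ℕ => 2 * Real.exp (-(ρ * n))) := by
      have : ∀ n : ℕ, 2 * Real.exp (-(ρ * n)) = 2 * (Real.exp (-ρ)) ^ n := by
        intro n
        rw [← Real.exp_nat_mul]
        ring_nf
      rw [funext this]
      apply Summable.mul_left
      apply summable_geometric_of_lt_one (Real.exp_pos _).le
      rw [Real.exp_lt_one_iff]
      linarith
    have hle : ∑' n : ℕ, P (s n) ≤ ∑' n : ℕ, ENNReal.ofReal (2 * Real.exp (-(ρ * n))) :=
      ENNReal.tsum_le_tsum hsn
    have : ∑' n : ℕ, ENNReal.ofReal (2 * Real.exp (-(ρ * n)))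
        = ENNReal.ofReal (∑' n : ℕ, 2 * Real.exp (-(ρ * n))) :=
      (ENNReal.ofReal_tsum_of_nonneg hnn hgeom).symm
    rw [this] at hle
    exact ne_top_of_le_ne_top ENNReal.ofReal_ne_top hle
  filter_upwards [MeasureTheory.ae_eventually_notMem hsum] with ω hω
  filter_upwards [hω] with n hn
  rw [hs] at hn
  simp only [Set.mem_setOf_eq] at hn
  linarith [not_le.1 hn]

lemma ae_tendsto_div
    (hpnn : ∀ x y, 0 ≤ p x y)
    (hsum1 : ∀ x, ∑ y ∈ nbhd x, p x y = 1)
    (hstep : ∀ x, ∑ y ∈ nbhd x, p x y * F y = F x + δ)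
    (hC : 0 ≤ C)
    (hCb : ∀ x, ∀ y ∈ nbhd x, |F y - F x - δ| ≤ C)
    (hcyl : ∀ (n : ℕ) (w : ℕ → List (Fin d)),
      P {ω | ∀ k ≤ n, ω k = w k}
        = ENNReal.ofReal ((if w 0 = ([] : List (Fin d)) then (1 : ℝ) else 0) *
            ∏ k ∈ Finset.range n, p (w k) (w (k + 1)))) :
    ∀ᵐ ω ∂P, Tendsto (fun n : ℕ => F (ω n) / n) atTop (nhds δ) := by
  have hall : ∀ᵐ ω ∂P, ∀ j : ℕ,
      ∀ᶠ n : ℕ in atTop, |F (ω n) - F [] - δ * n| < (1 / (j + 1)) * n := by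
    rw [MeasureTheory.ae_all_iff]
    intro j
    exact ae_eventually_close p P F δ C hpnn hsum1 hstep hC hCb hcyl
      (by positivity : (0:ℝ) < 1 / (j + 1))
  filter_upwards [hall] with ω hω
  rw [Metric.tendsto_atTop]
  intro ε hε
  obtain ⟨j, hj⟩ := exists_nat_one_div_lt (half_pos hε)
  obtain ⟨N1, hN1⟩ := (hω j).exists_forall_of_atTop
  obtain ⟨N2, hN2⟩ : ∃ N2 : ℕ, ∀ n ≥ N2, |F []| / n < ε / 4 := by
    have := tendsto_const_div_atTop_nhds_zero_nat |F []|
    rw [Metric.tendsto_atTop] at this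
    obtain ⟨N2, hN2⟩ := this (ε / 4) (by linarith)
    exact ⟨N2, fun n hn => by
      have := hN2 n hn
      rw [Real.dist_eq, sub_zero] at this
      calc |F []| / n ≤ |(|F []| / n)| := le_abs_self _
        _ < ε / 4 := this⟩
  refine ⟨max (max N1 N2) 1, fun n hn => ?_⟩
  have hn1 : N1 ≤ n := le_trans (le_trans (le_max_left _ _) (le_max_left _ _)) hn
  have hn2 : N2 ≤ n := le_trans (le_trans (le_max_right _ _) (le_max_left _ _)) hn
  have hnpos : (0:ℝ) < n := by
    have : 1 ≤ n := le_trans (le_max_right _ _) hn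
    exact_mod_cast Nat.lt_of_lt_of_le Nat.zero_lt_one this
  rw [Real.dist_eq]
  have h1 := hN1 n hn1
  have h2 := hN2 n hn2
  have key : |F (ω n) / n - δ| ≤ |F (ω n) - F [] - δ * n| / n + |F []| / n := by
    have e1 : F (ω n) / n - δ = (F (ω n) - δ * n) / n := by field_simp
    rw [e1, abs_div, abs_of_pos hnpos, ← add_div]
    rw [div_le_div_iff_of_pos_right hnpos]
    have h4 := abs_add_le (F (ω n) - F [] - δ * n) (F [])
    have h5 : F (ω n) - F [] - δ * n + F [] = F (ω n) - δ * n := by ring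
    rwa [h5] at h4
  have h3 : |F (ω n) - F [] - δ * n| / n < 1 / (j + 1) := by
    rw [div_lt_iff₀ hnpos]
    calc |F (ω n) - F [] - δ * n| < (1 / (j + 1)) * n := h1
      _ ≤ 1 / (j + 1) * n := le_refl _
  have hj' : (1 : ℝ) / (j + 1) < ε / 2 := by exact_mod_cast hj
  linarith
end BC
end Stmt18aux

namespace Stmt18aux
section Incr
variable {d : ℕ}

lemma Fc_incr_bound (φ u a : Fin d → ℝ) (h0 δ B : ℝ)
    (hφ : ∀ j, |φ j| ≤ 1) (hB : ∀ x, |hcorr u a h0 x| ≤ B) :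
    ∀ x, ∀ y ∈ nbhd x, |Fc φ u a h0 y - Fc φ u a h0 x - δ| ≤ 1 + 2 * B + |δ| := by
  intro x y hy
  rcases mem_nbhd.1 hy with ⟨j, rfl⟩ | ⟨hxne, rfl⟩
  · have e : Fc φ u a h0 (x ++ [j]) - Fc φ u a h0 x - δ
        = φ j + hcorr u a h0 (x ++ [j]) - hcorr u a h0 x - δ := by
      rw [Fc, Fc, sum_map_concat]
      ring
    rw [e]
    have b1 := abs_le.1 (hφ j)
    have b2 := abs_le.1 (hB (x ++ [j]))
    have b3 := abs_le.1 (hB x)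
    have b4 : -|δ| ≤ δ ∧ δ ≤ |δ| := ⟨neg_abs_le δ, le_abs_self δ⟩
    rw [abs_le]
    constructor <;> linarith [b4.1, b4.2]
  · obtain ⟨z, j, hx⟩ := List.eq_nil_or_concat x |>.resolve_left hxne
    rw [List.concat_eq_append] at hx
    subst hx
    rw [List.dropLast_concat]
    have e : Fc φ u a h0 z - Fc φ u a h0 (z ++ [j]) - δ
        = -(φ j) + hcorr u a h0 z - hcorr u a h0 (z ++ [j]) - δ := by
      rw [Fc, Fc, sum_map_concat]
      ring
    rw [e]
    have b1 := abs_le.1 (hφ j)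
    have b2 := abs_le.1 (hB (z ++ [j]))
    have b3 := abs_le.1 (hB z)
    have b4 : -|δ| ≤ δ ∧ δ ≤ |δ| := ⟨neg_abs_le δ, le_abs_self δ⟩
    rw [abs_le]
    constructor <;> linarith [b4.1, b4.2]

lemma sum_map_one (x : List (Fin d)) :
    (x.map (fun _ => (1 : ℝ))).sum = x.length := by
  induction x with
  | nil => simp
  | cons j t ih => simp [ih]; ring

lemma sum_map_ind (i : Fin d) (x : List (Fin d)) :
    (x.map (fun j => if j = i then (1 : ℝ) else 0)).sum = x.count i := by
  induction x with
  | nil => simp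
  | cons j t ih =>
      simp only [List.map_cons, List.sum_cons, ih, List.count_cons]
      push_cast
      by_cases h : j = i
      · simp [h]; ring
      · simp [h, (by simpa using h : ¬ (j == i) = true)]
end Incr
end Stmt18aux

/-- Almost-sure limiting monomer proportions: assume
`α = Σ i, k⁺ i / k⁻ i > 1`, let `m` be the unique positive real with
`Σ r, k⁺ r / (m + k⁻ r) = 1`, and set `σ̄ i = k⁺ i / (m + k⁻ i)`.  Let `P` be the law on
trajectory space `ℕ → List (Fin d)` of the embedded discrete-time Markov chain with
transition probabilities `p` started at the root `o = []` (characterized by its cylinder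
probabilities).  Then for every `i`, `P`-almost surely the proportion
`cᵢ(Z n)/|Z n|` of monomers of type `i` converges to `σ̄ i` (where the ratio is `0`
whenever `Z n = o`, by the Lean convention `a / 0 = 0`). -/
theorem stmt18 (d : ℕ) (hd : 1 ≤ d) (kp km : Fin d → ℝ)
    (hkp : ∀ i, 0 < kp i) (hkm : ∀ i, 0 < km i)
    (K : ℝ) (hK : K = ∑ i : Fin d, kp i)
    (hα : 1 < ∑ i : Fin d, kp i / km i)
    (m : ℝ) (hm : 0 < m) (hmeq : ∑ r : Fin d, kp r / (m + km r) = 1)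
    (σ : Fin d → ℝ) (hσ : ∀ i, σ i = kp i / (m + km i))
    (p : List (Fin d) → List (Fin d) → ℝ)
    (hp_root : ∀ i : Fin d, p [] [i] = kp i / K)
    (hp_up : ∀ (x : List (Fin d)) (i j : Fin d),
      p (x ++ [i]) (x ++ [i] ++ [j]) = kp j / (km i + K))
    (hp_down : ∀ (x : List (Fin d)) (i : Fin d), p (x ++ [i]) x = km i / (km i + K))
    (hp_zero : ∀ x y : List (Fin d),
      (¬ ∃ i : Fin d, y = x ++ [i]) → (¬ ∃ i : Fin d, x = y ++ [i]) → p x y = 0)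
    (P : Measure (ℕ → List (Fin d))) [IsProbabilityMeasure P]
    (hcyl : ∀ (n : ℕ) (w : ℕ → List (Fin d)),
      P {ω | ∀ k ≤ n, ω k = w k}
        = ENNReal.ofReal ((if w 0 = ([] : List (Fin d)) then (1 : ℝ) else 0) *
            ∏ k ∈ Finset.range n, p (w k) (w (k + 1)))) :
    ∀ i : Fin d, ∀ᵐ ω ∂P,
      Tendsto (fun n : ℕ => ((ω n).count i : ℝ) / ((ω n).length : ℝ))
        atTop (nhds (σ i)) := by

  classical
  intro i
  have hdne : Nonempty (Fin d) := Fin.pos_iff_nonempty.mp hd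
  have hne0 : (Finset.univ : Finset (Fin d)).Nonempty := Finset.univ_nonempty
  have hKpos : 0 < K := by
    rw [hK]; exact Finset.sum_pos (fun j _ => hkp j) hne0
  have hpnn : ∀ x y, 0 ≤ p x y := fun x y =>
    Stmt18aux.p_nonneg kp km K p hkp hkm hKpos hp_root hp_up hp_down hp_zero x y
  have hsum1 : ∀ x, ∑ y ∈ Stmt18aux.nbhd x, p x y = 1 := fun x =>
    Stmt18aux.sum_nbhd_p kp km K p hkm hKpos hp_root hp_up hp_down hK x
  have hdenpos : ∀ j, 0 < m + km j := fun j => by have := hkm j; linarith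
  have hupos : ∀ j, 0 ≤ Stmt18aux.uc km m j := fun j =>
    le_of_lt (div_pos (hkm j) (hdenpos j))
  have hult : ∀ j, Stmt18aux.uc km m j < 1 := fun j => by
    rw [Stmt18aux.uc, div_lt_one (hdenpos j)]
    linarith [hkm j]
  set U := Finset.univ.sup' hne0 (Stmt18aux.uc km m) with hUdef
  have hU1 : U < 1 := (Finset.sup'_lt_iff hne0).2 fun j _ => hult j
  have hU0 : 0 ≤ U :=
    le_trans (hupos (Classical.arbitrary (Fin d)))
      (Finset.le_sup' _ (Finset.mem_univ _))
  have hUb : ∀ j, |Stmt18aux.uc km m j| ≤ U := fun j => by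
    rw [abs_of_nonneg (hupos j)]
    exact Finset.le_sup' _ (Finset.mem_univ j)
  have key : ∀ φ : Fin d → ℝ, (∀ j, |φ j| ≤ 1) →
      (∃ B : ℝ, ∀ x, |Stmt18aux.hcorr (Stmt18aux.uc km m) (Stmt18aux.ac kp km K m φ)
          (Stmt18aux.h0c kp km K m φ) x| ≤ B) ∧
      ∀ᵐ ω ∂P, Tendsto (fun n : ℕ => Stmt18aux.Fc φ (Stmt18aux.uc km m)
          (Stmt18aux.ac kp km K m φ) (Stmt18aux.h0c kp km K m φ) (ω n) / n) atTop
          (nhds (Stmt18aux.dlt kp km K m φ)) := by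
    intro φ hφ
    set a := Stmt18aux.ac kp km K m φ with hadef
    set h0 := Stmt18aux.h0c kp km K m φ with hh0def
    set A := Finset.univ.sup' hne0 (fun j => |a j|) with hAdef
    have hA : ∀ j, |a j| ≤ A := fun j => Finset.le_sup' (fun j => |a j|) (Finset.mem_univ j)
    have hA0 : 0 ≤ A := (abs_nonneg _).trans (hA (Classical.arbitrary _))
    set B := |h0| + A / (1 - U) with hBdef
    have hB : ∀ x, |Stmt18aux.hcorr (Stmt18aux.uc km m) a h0 x| ≤ B := fun x =>
      Stmt18aux.hcorr_bound (Stmt18aux.uc km m) a h0 A U hA hUb hU1 hU0 hA0 x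
    have hB0 : 0 ≤ B := (abs_nonneg h0).trans (by simpa using hB [])
    set δ := Stmt18aux.dlt kp km K m φ with hδdef
    set C := 1 + 2 * B + |δ| with hCdef
    have hC0 : 0 ≤ C := by
      have := abs_nonneg δ
      rw [hCdef]; linarith
    have hCb := Stmt18aux.Fc_incr_bound φ (Stmt18aux.uc km m) a h0 δ B hφ hB
    have hstep := Stmt18aux.sum_nbhd_mul kp km K m φ p hd hkp hkm hm hK hKpos hmeq
      hp_root hp_up hp_down
    exact ⟨⟨B, hB⟩, Stmt18aux.ae_tendsto_div p P
      (Stmt18aux.Fc φ (Stmt18aux.uc km m) a h0) δ C hpnn hsum1 hstep hC0 hCb hcyl⟩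
  obtain ⟨⟨B1, hB1⟩, h1⟩ := key (fun _ => (1 : ℝ)) (fun j => by norm_num)
  obtain ⟨⟨B2, hB2⟩, h2⟩ := key (fun j => if j = i then (1 : ℝ) else 0)
    (fun j => by by_cases h : j = i <;> simp [h])
  have h2Km : 0 < 2 * K - m := by
    have := Stmt18aux.m_lt_K kp km K m hkp hkm hm hK hmeq hd
    linarith
  have hv : Stmt18aux.dlt kp km K m (fun _ => (1 : ℝ)) = m / (2 * K - m) := by
    rw [Stmt18aux.dlt]
    have : ∑ j : Fin d, kp j * (1 : ℝ) / (m + km j) = 1 := by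
      calc ∑ j : Fin d, kp j * (1 : ℝ) / (m + km j)
          = ∑ j : Fin d, kp j / (m + km j) :=
            Finset.sum_congr rfl fun j _ => by rw [mul_one]
        _ = 1 := hmeq
    rw [this, mul_one]
  have hvpos : 0 < Stmt18aux.dlt kp km K m (fun _ => (1 : ℝ)) := by
    rw [hv]; positivity
  have hw : Stmt18aux.dlt kp km K m (fun j => if j = i then (1 : ℝ) else 0)
      = Stmt18aux.dlt kp km K m (fun _ => (1 : ℝ)) * σ i := by
    rw [Stmt18aux.dlt, hv, hσ i]
    have : ∑ j : Fin d, kp j * (if j = i then (1 : ℝ) else 0) / (m + km j)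
        = kp i / (m + km i) := by
      have e : ∀ j : Fin d, kp j * (if j = i then (1 : ℝ) else 0) / (m + km j)
          = if j = i then kp j / (m + km j) else 0 := by
        intro j
        by_cases h : j = i <;> simp [h]
      rw [Finset.sum_congr rfl fun j _ => e j, Finset.sum_ite_eq' Finset.univ i]
      simp
    rw [this]
    ring
  filter_upwards [h1, h2] with ω hω1 hω2
  have hcorr_div_zero : ∀ (a' : Fin d → ℝ) (h0' B' : ℝ),
      (∀ x, |Stmt18aux.hcorr (Stmt18aux.uc km m) a' h0' x| ≤ B') →
      Tendsto (fun n : ℕ => Stmt18aux.hcorr (Stmt18aux.uc km m) a' h0' (ω n) / n)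
        atTop (nhds 0) := by
    intro a' h0' B' hB'
    apply squeeze_zero_norm (a := fun n : ℕ => B' / n)
    · intro n
      rw [Real.norm_eq_abs, abs_div, Nat.abs_cast]
      rcases Nat.eq_zero_or_pos n with rfl | hn
      · simp
      · have hn' : (0:ℝ) < n := by exact_mod_cast hn
        exact div_le_div_of_nonneg_right (hB' (ω n)) hn'.le |>.trans (le_refl _)
    · exact tendsto_const_div_atTop_nhds_zero_nat B'
  have hlen : Tendsto (fun n : ℕ => ((ω n).length : ℝ) / n) atTop
      (nhds (Stmt18aux.dlt kp km K m (fun _ => (1 : ℝ)))) := by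
    have hz := hcorr_div_zero (Stmt18aux.ac kp km K m (fun _ => (1 : ℝ)))
      (Stmt18aux.h0c kp km K m (fun _ => (1 : ℝ))) B1 hB1
    have heq : (fun n : ℕ => ((ω n).length : ℝ) / n)
        = fun n : ℕ => Stmt18aux.Fc (fun _ => (1 : ℝ)) (Stmt18aux.uc km m)
            (Stmt18aux.ac kp km K m (fun _ => (1 : ℝ)))
            (Stmt18aux.h0c kp km K m (fun _ => (1 : ℝ))) (ω n) / n
          - Stmt18aux.hcorr (Stmt18aux.uc km m)
              (Stmt18aux.ac kp km K m (fun _ => (1 : ℝ)))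
              (Stmt18aux.h0c kp km K m (fun _ => (1 : ℝ))) (ω n) / n := by
      funext n
      rw [Stmt18aux.Fc, Stmt18aux.sum_map_one]
      ring
    rw [heq]
    simpa using hω1.sub hz
  have hcnt : Tendsto (fun n : ℕ => (((ω n).count i : ℕ) : ℝ) / n) atTop
      (nhds (Stmt18aux.dlt kp km K m (fun j => if j = i then (1 : ℝ) else 0))) := by
    have hz := hcorr_div_zero (Stmt18aux.ac kp km K m (fun j => if j = i then (1 : ℝ) else 0))
      (Stmt18aux.h0c kp km K m (fun j => if j = i then (1 : ℝ) else 0)) B2 hB2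
    have heq : (fun n : ℕ => (((ω n).count i : ℕ) : ℝ) / n)
        = fun n : ℕ => Stmt18aux.Fc (fun j => if j = i then (1 : ℝ) else 0) (Stmt18aux.uc km m)
            (Stmt18aux.ac kp km K m (fun j => if j = i then (1 : ℝ) else 0))
            (Stmt18aux.h0c kp km K m (fun j => if j = i then (1 : ℝ) else 0)) (ω n) / n
          - Stmt18aux.hcorr (Stmt18aux.uc km m)
              (Stmt18aux.ac kp km K m (fun j => if j = i then (1 : ℝ) else 0))
              (Stmt18aux.h0c kp km K m (fun j => if j = i then (1 : ℝ) else 0)) (ω n) / n := by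
      funext n
      rw [Stmt18aux.Fc, Stmt18aux.sum_map_ind]
      ring
    rw [heq]
    simpa using hω2.sub hz
  have hfinal : Tendsto (fun n : ℕ => ((((ω n).count i : ℕ) : ℝ) / n)
      / (((ω n).length : ℝ) / n)) atTop
      (nhds (Stmt18aux.dlt kp km K m (fun j => if j = i then (1 : ℝ) else 0)
        / Stmt18aux.dlt kp km K m (fun _ => (1 : ℝ)))) :=
    hcnt.div hlen hvpos.ne'
  have hlim : Stmt18aux.dlt kp km K m (fun j => if j = i then (1 : ℝ) else 0)
      / Stmt18aux.dlt kp km K m (fun _ => (1 : ℝ)) = σ i := by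
    rw [hw, mul_comm, mul_div_assoc, div_self hvpos.ne', mul_one]
  have hev : (fun n : ℕ => ((((ω n).count i : ℕ) : ℝ) / n) / (((ω n).length : ℝ) / n))
      =ᶠ[atTop] fun n : ℕ => (((ω n).count i : ℕ) : ℝ) / ((ω n).length : ℝ) := by
    filter_upwards [eventually_ge_atTop 1] with n hn
    have hn0 : (n : ℝ) ≠ 0 := by
      have : (0:ℕ) < n := hn
      positivity
    rcases eq_or_ne (((ω n).length : ℝ)) 0 with hl | hl
    · rw [hl]
      simp
    · field_simp
  have := Filter.Tendsto.congr' hev hfinal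
  rwa [hlim] at this
end
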